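/- arXiv:2211.02926 — 5 statements merged into one kernel-verified Lean document; each statement's English description precedes it below -/
import Mathlib

section
/- For all enforcements Q, Q' and every r ∈ ℕ, if Q' ⊑ Q then Q'↑r ⊑ Q↑r. -/
/-- `p ≺ q` iff `(-1)^p * p < (-1)^q * q` computed in `ℤ`. -/
def prec (p q : ℕ) : Prop := ((-1 : ℤ) ^ p * p < (-1 : ℤ) ^ q * q)

/-- `p ⪯ q` iff `p ≺ q` or `p = q`. -/
def preceq (p q : ℕ) : Prop := prec p q ∨ p = q

/-- An enforcement is a partial function `C ⇀ ℕ`, modelled as `C → Option ℕ`.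
`esub P Q` is the relation `P ⊑ Q`. -/
def esub {C : Type*} (P Q : C → Option ℕ) : Prop :=
  ∀ a p, P a = some p → ∃ q, Q a = some q ∧ preceq q p

/-- The lift `Q↑r`: same domain as `Q`, value `max (Q a) r`. -/
def elift {C : Type*} (Q : C → Option ℕ) (r : ℕ) : C → Option ℕ :=
  fun a => (Q a).map fun q => max q r

lemma preceq_max (q p r : ℕ) (h : preceq q p) : preceq (max q r) (max p r) := by
  have e1 := le_max_left q r
  have e2 := le_max_right q r
  have e3 := le_max_left p r
  have e4 := le_max_right p r
  rcases max_choice q r with h1 | h1 <;> rcases max_choice p r with h2 | h2 <;>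
    rw [h1] at e1 e2 ⊢ <;> rw [h2] at e3 e4 ⊢ <;>
    unfold preceq prec at h ⊢ <;>
    rcases Nat.even_or_odd q with hq | hq <;> rcases Nat.even_or_odd p with hp | hp <;>
    rcases Nat.even_or_odd r with hr | hr <;>
    simp only [hq.neg_one_pow, hp.neg_one_pow, hr.neg_one_pow, one_mul, neg_mul,
      neg_one_mul] at h ⊢ <;>
    first | omega | tauto

theorem stmt4 (C : Type*) [Fintype C] (Q Q' : C → Option ℕ) (r : ℕ)
    (h : esub Q' Q) : esub (elift Q' r) (elift Q r) := by
  intro a p hp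
  simp only [elift, Option.map_eq_some_iff] at hp ⊢
  obtain ⟨p', hp', rfl⟩ := hp
  obtain ⟨q, hq, hqp⟩ := h a p' hp'
  exact ⟨max q r, ⟨q, hq, rfl⟩, preceq_max q p' r hqp⟩
end

section
/- For all enforcements P, P', Q, Q' and every color c ∈ C, if P' ⊑ P and Q' ⊑ Q, then Merge(P', c, Q') ⊑ Merge(P, c, Q). -/
open Classical

/-- The union `P ⊔ Q`: its domain is `dom P ∪ dom Q` and its value at `a`
is the `⪯`-minimum of the defined ones among `P a`, `Q a`. -/
noncomputable def eunion {C : Type*} (P Q : C → Option ℕ) : C → Option ℕ := fun a =>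
  match P a, Q a with
  | none, q => q
  | some p, none => some p
  | some p, some q => some (if preceq p q then p else q)

/-- `Merge(P, c, Q)`, where `CE` is the set of colors of player E (the colors of
player O form its complement): if `c ∈ dom P` and `c` belongs to player O this is
`P ⊔ (Q↑P(c))`; if `c ∈ dom P` and `c` belongs to player E this is
`P′ ⊔ (Q↑P(c))` with `P′` being `P` with `c` removed from its domain;
otherwise it is `P`. -/
noncomputable def emerge {C : Type*} (CE : Set C) (P : C → Option ℕ) (c : C)
    (Q : C → Option ℕ) : C → Option ℕ :=
  match P c with
  | none => P
  | some r =>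
      if c ∈ CE then eunion (fun a => if a = c then none else P a) (elift Q r)
      else eunion P (elift Q r)

lemma preceq_iff (p q : ℕ) :
    preceq p q ↔ ((if p % 2 = 0 then (p:ℤ) else -p) ≤ if q % 2 = 0 then (q:ℤ) else -q) := by
  rcases Nat.even_or_odd p with hp | hp <;> rcases Nat.even_or_odd q with hq | hq <;>
  · first
    | (have hp2 := Nat.even_iff.mp hp)
    | (have hp2 := Nat.odd_iff.mp hp)
    first
    | (have hq2 := Nat.even_iff.mp hq)
    | (have hq2 := Nat.odd_iff.mp hq)
    simp only [preceq, prec, hp.neg_one_pow, hq.neg_one_pow, hp2, hq2, one_mul, neg_mul,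
      neg_one_mul]
    norm_num
    omega

lemma preceq_refl (p : ℕ) : preceq p p := Or.inr rfl

lemma preceq_trans {p q r : ℕ} (h1 : preceq p q) (h2 : preceq q r) : preceq p r := by
  rw [preceq_iff] at *
  split_ifs at * <;> omega

lemma preceq_total (p q : ℕ) : preceq p q ∨ preceq q p := by
  rw [preceq_iff, preceq_iff]
  split_ifs <;> omega

lemma preceq_max_s5 {q q' r r' : ℕ} (h1 : preceq q q') (h2 : preceq r r') :
    preceq (max q r) (max q' r') := by
  rw [preceq_iff] at *
  rcases Nat.le_total q r with h | h <;> rcases Nat.le_total q' r' with h' | h' <;>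
    [rw [Nat.max_eq_right h, Nat.max_eq_right h'];
     rw [Nat.max_eq_right h, Nat.max_eq_left h'];
     rw [Nat.max_eq_left h, Nat.max_eq_right h'];
     rw [Nat.max_eq_left h, Nat.max_eq_left h']] <;>
  split_ifs at * <;> omega

lemma min_preceq_left (p q : ℕ) : preceq (if preceq p q then p else q) p := by
  by_cases h : preceq p q
  · simpa [h] using preceq_refl p
  · simp only [h, if_false]
    rcases preceq_total p q with h' | h'
    · exact absurd h' h
    · exact h'

lemma min_preceq_right (p q : ℕ) : preceq (if preceq p q then p else q) q := by
  by_cases h : preceq p q <;> simp [h, preceq_refl]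

lemma esub_eunion_right {C : Type*} {A B : C → Option ℕ} (D : C → Option ℕ)
    (h : esub A B) : esub A (eunion B D) := by
  intro a v hv
  obtain ⟨q, hq, hle⟩ := h a v hv
  rcases hD : D a with _ | d
  · exact ⟨q, by simp [eunion, hq, hD], hle⟩
  · exact ⟨if preceq q d then q else d, by simp [eunion, hq, hD],
      preceq_trans (min_preceq_left q d) hle⟩

lemma esub_eunion_mono {C : Type*} {P P' Q Q' : C → Option ℕ}
    (hP : esub P' P) (hQ : esub Q' Q) : esub (eunion P' Q') (eunion P Q) := by
  intro a v hv
  rcases hA : P' a with _ | p <;> rcases hB : Q' a with _ | q <;>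
    simp only [eunion, hA, hB, Option.some.injEq, reduceCtorEq] at hv
  · -- P' a = none, Q' a = some q, v = q
    obtain ⟨q1, hq1, hle1⟩ := hQ a q hB
    rcases hPa : P a with _ | p1
    · exact ⟨q1, by simp [eunion, hPa, hq1], hv ▸ hle1⟩
    · exact ⟨if preceq p1 q1 then p1 else q1, by simp [eunion, hPa, hq1],
        hv ▸ preceq_trans (min_preceq_right p1 q1) hle1⟩
  · -- P' a = some p, Q' a = none, v = p
    obtain ⟨p1, hp1, hle1⟩ := hP a p hA
    rcases hQa : Q a with _ | q1
    · exact ⟨p1, by simp [eunion, hp1, hQa], hv ▸ hle1⟩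
    · exact ⟨if preceq p1 q1 then p1 else q1, by simp [eunion, hp1, hQa],
        hv ▸ preceq_trans (min_preceq_left p1 q1) hle1⟩
  · -- both some
    obtain ⟨p1, hp1, hle1⟩ := hP a p hA
    obtain ⟨q1, hq1, hle2⟩ := hQ a q hB
    refine ⟨if preceq p1 q1 then p1 else q1, by simp [eunion, hp1, hq1], ?_⟩
    subst hv
    by_cases h : preceq p q
    · simpa [h] using preceq_trans (min_preceq_left p1 q1) hle1
    · simpa [h] using preceq_trans (min_preceq_right p1 q1) hle2

lemma esub_elift {C : Type*} {Q Q' : C → Option ℕ} {r r' : ℕ}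
    (hQ : esub Q' Q) (hr : preceq r r') : esub (elift Q' r') (elift Q r) := by
  intro a v hv
  rcases hB : Q' a with _ | q' <;> simp only [elift, hB, Option.map_none, Option.map_some,
    Option.some.injEq, reduceCtorEq] at hv
  obtain ⟨q, hq, hle⟩ := hQ a q' hB
  exact ⟨max q r, by simp [elift, hq], hv ▸ preceq_max_s5 hle hr⟩

theorem stmt5 (C : Type*) [Fintype C] (CE : Set C) (P P' Q Q' : C → Option ℕ) (c : C)
    (hP : esub P' P) (hQ : esub Q' Q) :
    esub (emerge CE P' c Q') (emerge CE P c Q) := by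
  rcases hc' : P' c with _ | r'
  · -- P' c = none : Merge(P',c,Q') = P'
    have hL : emerge CE P' c Q' = P' := by simp [emerge, hc']
    rw [hL]
    rcases hc : P c with _ | r
    · have hR : emerge CE P c Q = P := by simp [emerge, hc]
      rw [hR]; exact hP
    · by_cases hCE : c ∈ CE
      · have hR : emerge CE P c Q =
            eunion (fun a => if a = c then none else P a) (elift Q r) := by
          simp [emerge, hc, hCE]
        rw [hR]
        apply esub_eunion_right
        intro a p hp
        have hac : a ≠ c := by rintro rfl; rw [hc'] at hp; cases hp
        obtain ⟨q, hq, hle⟩ := hP a p hp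
        exact ⟨q, by simp [hac, hq], hle⟩
      · have hR : emerge CE P c Q = eunion P (elift Q r) := by
          simp [emerge, hc, hCE]
        rw [hR]
        exact esub_eunion_right _ hP
  · -- P' c = some r'
    obtain ⟨r, hc, hr⟩ := hP c r' hc'
    by_cases hCE : c ∈ CE
    · have hL : emerge CE P' c Q' =
          eunion (fun a => if a = c then none else P' a) (elift Q' r') := by
        simp [emerge, hc', hCE]
      have hR : emerge CE P c Q =
          eunion (fun a => if a = c then none else P a) (elift Q r) := by
        simp [emerge, hc, hCE]
      rw [hL, hR]
      refine esub_eunion_mono ?_ (esub_elift hQ hr)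
      intro a p hp
      by_cases hac : a = c
      · simp [hac] at hp
      · simp only [hac, if_false] at hp ⊢
        exact hP a p hp
    · have hL : emerge CE P' c Q' = eunion P' (elift Q' r') := by
        simp [emerge, hc', hCE]
      have hR : emerge CE P c Q = eunion P (elift Q r) := by
        simp [emerge, hc, hCE]
      rw [hL, hR]
      exact esub_eunion_mono hP (esub_elift hQ hr)
end

section
/- If a finite directed graph G = (V, E) has an elimination forest of height k, then every simple path in G has length at most 2^(k+1) − 2. -/
/-- `IsAncestor parent v w`: `w` is an ancestor of `v` in the rooted forest given by
the partial parent function (every vertex is an ancestor of itself). -/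
def IsAncestor {V : Type*} (parent : V → Option V) (v w : V) : Prop :=
  Relation.ReflTransGen (fun a b => parent a = some b) v w

/-- An elimination forest of height `k` of the directed graph `(V, E)`:
a rooted forest on the vertex set `V` (given by a parent function together with a
depth function, so every root-to-node path has at most `k + 1` nodes), such that
for every edge `(v, w) ∈ E` one of `v`, `w` is an ancestor of the other. -/
structure ElimForest (V : Type*) (E : V → V → Prop) (k : ℕ) where
  parent : V → Option V
  depth : V → ℕ
  depth_le : ∀ v, depth v ≤ k
  depth_root : ∀ v, parent v = none → depth v = 0
  depth_parent : ∀ v w, parent v = some w → depth v = depth w + 1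
  cover : ∀ v w, E v w → IsAncestor parent v w ∨ IsAncestor parent w v

lemma anc_depth {V : Type*} {E : V → V → Prop} {k : ℕ} (F : ElimForest V E k)
    {x y : V} (h : IsAncestor F.parent x y) : x = y ∨ F.depth y < F.depth x := by
  induction h with
  | refl => exact Or.inl rfl
  | tail hxb hb ih =>
    have hd := F.depth_parent _ _ hb
    rcases ih with rfl | hlt
    · omega
    · omega

lemma anc_total {V : Type*} {p : V → Option V} : ∀ {x y z : V}, IsAncestor p x y →
    IsAncestor p x z → IsAncestor p y z ∨ IsAncestor p z y := by
  intro x y z hxy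
  induction hxy using Relation.ReflTransGen.head_induction_on with
  | refl => exact fun hxz => Or.inl hxz
  | head h' hcy ih =>
    intro hxz
    rcases Relation.ReflTransGen.cases_head hxz with rfl | ⟨c', hc', hz⟩
    · exact Or.inr (Relation.ReflTransGen.head h' hcy)
    · rw [h'] at hc'
      injection hc' with hc''
      subst hc''
      exact ih hz

lemma key_lemma {V : Type*} {E : V → V → Prop} {k : ℕ} (F : ElimForest V E k) :
    ∀ n d (p : ℕ → V),
      (∀ i₁ i₂, i₁ ≤ n → i₂ ≤ n → p i₁ = p i₂ → i₁ = i₂) →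
      (∀ i, i < n → E (p i) (p (i+1)) ∨ E (p (i+1)) (p i)) →
      (∀ i, i ≤ n → d ≤ F.depth (p i)) →
      n + 1 ≤ 2 ^ (k + 1 - d) - 1 := by
  intro n
  induction n using Nat.strong_induction_on with
  | _ n ih =>
    intro d p hinj hadj hdep
    obtain ⟨j, hjmem, hjmin⟩ := Finset.exists_min_image (Finset.range (n+1))
      (fun i => F.depth (p i)) ⟨0, by simp⟩
    simp only [Finset.mem_range] at hjmem
    have hjn : j ≤ n := by omega
    set u := p j with hu
    set du := F.depth u with hdu
    have hmin : ∀ i, i ≤ n → du ≤ F.depth (p i) := fun i hi =>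
      hjmin i (by simp only [Finset.mem_range]; omega)
    have hduk : du ≤ k := F.depth_le u
    have hddu : d ≤ du := hdep j hjn
    have step : ∀ x y, IsAncestor F.parent x u → (E x y ∨ E y x) →
        du ≤ F.depth y → IsAncestor F.parent y u := by
      intro x y hxu hE hy
      have hcov : IsAncestor F.parent x y ∨ IsAncestor F.parent y x := by
        rcases hE with h | h
        · exact F.cover _ _ h
        · exact (F.cover _ _ h).symm
      rcases hcov with h | h
      · rcases anc_total h hxu with h2 | h2
        · exact h2
        · rcases anc_depth F h2 with rfl | hlt
          · exact Relation.ReflTransGen.refl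
          · omega
      · exact Relation.ReflTransGen.trans h hxu
    have hright : ∀ t, j + t ≤ n → IsAncestor F.parent (p (j+t)) u := by
      intro t
      induction t with
      | zero => exact fun _ => Relation.ReflTransGen.refl
      | succ t iht =>
        intro ht
        have h1 := iht (by omega)
        have h2 := hadj (j+t) (by omega)
        exact step _ _ h1 h2 (hmin (j+t+1) (by omega))
    have hleft : ∀ t, t ≤ j → IsAncestor F.parent (p (j-t)) u := by
      intro t
      induction t with
      | zero => exact fun _ => Relation.ReflTransGen.refl
      | succ t iht =>
        intro ht
        have h1 := iht (by omega)
        have h2 := hadj (j-t-1) (by omega)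
        have e : j - t - 1 + 1 = j - t := by omega
        rw [e] at h2
        have := step _ _ h1 h2.symm (hmin (j-t-1) (by omega))
        have e2 : j - (t+1) = j - t - 1 := by omega
        rw [e2]
        exact this
    have allDesc : ∀ i, i ≤ n → IsAncestor F.parent (p i) u := by
      intro i hi
      rcases le_or_gt j i with h | h
      · have := hright (i - j) (by omega)
        rwa [Nat.add_sub_cancel' h] at this
      · have := hleft (j - i) (by omega)
        rwa [Nat.sub_sub_self (le_of_lt h)] at this
    have strict : ∀ i, i ≤ n → i ≠ j → du + 1 ≤ F.depth (p i) := by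
      intro i hi hij
      rcases anc_depth F (allDesc i hi) with heq | hlt
      · exact absurd (hinj i j hi hjn heq) hij
      · omega
    have hL : j ≤ 2 ^ (k - du) - 1 := by
      rcases Nat.eq_zero_or_pos j with rfl | hj
      · exact Nat.zero_le _
      · have := ih (j-1) (by omega) (du+1) p
          (fun i₁ i₂ h1 h2 he => hinj i₁ i₂ (by omega) (by omega) he)
          (fun i hi => hadj i (by omega))
          (fun i hi => strict i (by omega) (by omega))
        have he : k + 1 - (du + 1) = k - du := by omega
        rw [he] at this
        omega
    have hR : n - j ≤ 2 ^ (k - du) - 1 := by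
      rcases Nat.eq_zero_or_pos (n - j) with h0 | hj
      · omega
      · have := ih (n-j-1) (by omega) (du+1) (fun i => p (j+1+i))
          (fun i₁ i₂ h1 h2 he => by
            have := hinj (j+1+i₁) (j+1+i₂) (by omega) (by omega) he
            omega)
          (fun i hi => hadj (j+1+i) (by omega))
          (fun i hi => strict (j+1+i) (by omega) (by omega))
        have he : k + 1 - (du + 1) = k - du := by omega
        rw [he] at this
        omega
    have hmono : 2 ^ (k - du) * 2 ≤ 2 ^ (k + 1 - d) := by
      rw [← pow_succ]
      exact Nat.pow_le_pow_right (by norm_num) (by omega)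
    have hpow : 1 ≤ 2 ^ (k - du) := Nat.one_le_two_pow
    generalize 2 ^ (k - du) = A at hL hR hpow hmono
    generalize 2 ^ (k + 1 - d) = B at hmono ⊢
    omega

theorem stmt6 {V : Type*} [Fintype V] (E : V → V → Prop) (k : ℕ)
    (F : ElimForest V E k) (m : ℕ) (p : Fin (m + 1) → V)
    (hinj : Function.Injective p)
    (hadj : ∀ i : Fin m, E (p i.castSucc) (p i.succ) ∨ E (p i.succ) (p i.castSucc)) :
    m ≤ 2 ^ (k + 1) - 2 := by
  have key := key_lemma F m 0 (fun i => p ⟨i % (m+1), Nat.mod_lt _ (Nat.succ_pos m)⟩)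
    (by
      intro i₁ i₂ h1 h2 he
      have := hinj he
      have e := congrArg Fin.val this
      simp only [Nat.mod_eq_of_lt (by omega : i₁ < m + 1),
        Nat.mod_eq_of_lt (by omega : i₂ < m + 1)] at e
      exact e)
    (by
      intro i hi
      have h := hadj ⟨i, hi⟩
      have e1 : (⟨i % (m+1), Nat.mod_lt _ (Nat.succ_pos m)⟩ : Fin (m+1)) =
          (⟨i, hi⟩ : Fin m).castSucc := by
        ext
        simp [Nat.mod_eq_of_lt (by omega : i < m + 1)]
      have e2 : (⟨(i+1) % (m+1), Nat.mod_lt _ (Nat.succ_pos m)⟩ : Fin (m+1)) =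
          (⟨i, hi⟩ : Fin m).succ := by
        ext
        simp [Nat.mod_eq_of_lt (by omega : i + 1 < m + 1)]
      simp only [e1, e2]
      exact h)
    (fun i _ => Nat.zero_le _)
  simp only [Nat.sub_zero] at key
  have hpow : 1 ≤ 2 ^ (k + 1) := Nat.one_le_two_pow
  generalize 2 ^ (k + 1) = B at key hpow ⊢
  omega
end

section
/- If a finite simple graph G has a rooted tree-decomposition of height h in which every bag contains at most k vertices, then G has an elimination forest of height at most k(h+1); in particular the tree-depth of G is at most k(h+1). -/
set_option linter.unusedSectionVars false
set_option maxHeartbeats 1000000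

open SimpleGraph

/-- A rooted tree-decomposition of the simple graph `G`, with underlying tree `T`
rooted at `r`, of height at most `h` (at most `h` edges on any root-to-node path),
in which every bag contains at most `k` vertices. -/
structure RootedTreeDecomp {V ι : Type*} (G : SimpleGraph V) (T : SimpleGraph ι)
    (r : ι) (h k : ℕ) where
  isTree : T.IsTree
  bag : ι → Finset V
  bag_card : ∀ x, (bag x).card ≤ k
  height_le : ∀ x, T.dist r x ≤ h
  vert_cover : ∀ v : V, ∃ x, v ∈ bag x
  edge_cover : ∀ v w, G.Adj v w → ∃ x, v ∈ bag x ∧ w ∈ bag x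
  bag_connected : ∀ (v : V) (x y : ι), v ∈ bag x → v ∈ bag y →
    ∃ p : T.Walk x y, ∀ z ∈ p.support, v ∈ bag z


section WalkLemmas

variable {X : Type*} {H : SimpleGraph X}

lemma path_getVert_inj {u v : X} {p : H.Walk u v} (hp : p.IsPath) :
    ∀ i j, i ≤ p.length → j ≤ p.length → p.getVert i = p.getVert j → i = j := by
  induction p with
  | nil => intro i j hi hj _; simp at hi hj; omega
  | @cons a b c ha q ih =>
    rw [Walk.cons_isPath_iff] at hp
    intro i j hi hj hij
    match i, j with
    | 0, 0 => rfl
    | 0, (j+1) =>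
      exfalso
      apply hp.2
      rw [Walk.getVert_zero, Walk.getVert_cons_succ] at hij
      exact Walk.mem_support_iff_exists_getVert.2
        ⟨j, hij.symm, by simpa [Nat.succ_le_succ_iff] using hj⟩
    | (i+1), 0 =>
      exfalso
      apply hp.2
      rw [Walk.getVert_zero, Walk.getVert_cons_succ] at hij
      exact Walk.mem_support_iff_exists_getVert.2
        ⟨i, hij, by simpa [Nat.succ_le_succ_iff] using hi⟩
    | (i+1), (j+1) =>
      rw [Walk.getVert_cons_succ, Walk.getVert_cons_succ] at hij
      have := ih hp.1 i j (by simpa [Nat.succ_le_succ_iff] using hi)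
        (by simpa [Nat.succ_le_succ_iff] using hj) hij
      omega

lemma isPath_concat' {u v w : X} {p : H.Walk u v} (hp : p.IsPath) (ha : H.Adj v w)
    (hw : w ∉ p.support) : (p.concat ha).IsPath := by
  rw [Walk.isPath_def, Walk.support_concat]
  simp [List.concat_eq_append, List.nodup_append, hp.support_nodup, hw]
  intro a ha he
  exact hw (he ▸ ha)

lemma getVert_takeUntil' [DecidableEq X] {a b y : X} {p : H.Walk a b} (hy : y ∈ p.support)
    {i : ℕ} (hi : i ≤ (p.takeUntil y hy).length) :
    (p.takeUntil y hy).getVert i = p.getVert i := by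
  conv_rhs => rw [← Walk.take_spec p hy]
  rw [Walk.getVert_append]
  rcases lt_or_eq_of_le hi with h' | h'
  · rw [if_pos h']
  · rw [if_neg (by omega), h', Nat.sub_self, Walk.getVert_zero, Walk.getVert_length]

end WalkLemmas

section TreeLemmas

variable {ι : Type*} [DecidableEq ι] {T : SimpleGraph ι} {r : ι}

noncomputable def Pt (ht : T.IsTree) (r x : ι) : T.Walk r x :=
  (ht.existsUnique_path r x).choose

lemma Pt_isPath (ht : T.IsTree) (x : ι) : (Pt ht r x).IsPath :=
  (ht.existsUnique_path r x).choose_spec.1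

lemma Pt_uniq (ht : T.IsTree) {x : ι} {q : T.Walk r x} (hq : q.IsPath) : q = Pt ht r x :=
  (ht.existsUnique_path r x).choose_spec.2 q hq

lemma Pt_length (ht : T.IsTree) (x : ι) : (Pt ht r x).length = T.dist r x := by
  refine le_antisymm ?_ (SimpleGraph.dist_le _)
  obtain ⟨q, hq⟩ := ht.isConnected.exists_walk_length_eq_dist r x
  calc (Pt ht r x).length = q.bypass.length := by
        rw [← Pt_uniq ht (q.bypass_isPath)]
    _ ≤ q.length := q.length_bypass_le
    _ = T.dist r x := hq

lemma Pt_takeUntil (ht : T.IsTree) {x y : ι} (hy : y ∈ (Pt ht r x).support) :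
    (Pt ht r x).takeUntil y hy = Pt ht r y :=
  Pt_uniq ht ((Pt_isPath ht x).takeUntil hy)

lemma Pt_dist_le (ht : T.IsTree) {x y : ι} (hy : y ∈ (Pt ht r x).support) :
    T.dist r y ≤ T.dist r x := by
  rw [← Pt_length ht x, ← Pt_length ht y, ← Pt_takeUntil ht hy]
  exact Walk.length_takeUntil_le _ _

lemma Pt_len_takeUntil (ht : T.IsTree) {x y : ι} (hy : y ∈ (Pt ht r x).support) :
    ((Pt ht r x).takeUntil y hy).length = T.dist r y := by
  rw [Pt_takeUntil ht hy, Pt_length]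

lemma Pt_getVert_dist (ht : T.IsTree) {x : ι} {i : ℕ} (hi : i ≤ (Pt ht r x).length) :
    T.dist r ((Pt ht r x).getVert i) = i := by
  have hmem : (Pt ht r x).getVert i ∈ (Pt ht r x).support :=
    Walk.mem_support_iff_exists_getVert.2 ⟨i, rfl, hi⟩
  have hlen := Pt_len_takeUntil ht hmem
  have h2 : (Pt ht r x).getVert (((Pt ht r x).takeUntil _ hmem).length)
      = (Pt ht r x).getVert i := by
    rw [← getVert_takeUntil' hmem (le_refl _), Walk.getVert_length]
  have := path_getVert_inj (Pt_isPath ht x) _ i (Walk.length_takeUntil_le _ _) hi h2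
  omega

lemma Pt_getVert_of_mem (ht : T.IsTree) {x y : ι} (hy : y ∈ (Pt ht r x).support) :
    (Pt ht r x).getVert (T.dist r y) = y := by
  obtain ⟨n, hn, hnle⟩ := Walk.mem_support_iff_exists_getVert.1 hy
  have := Pt_getVert_dist ht (x := x) hnle
  rw [hn] at this
  rw [this, hn]

lemma Pt_dist_inj (ht : T.IsTree) {x y z : ι} (hy : y ∈ (Pt ht r x).support)
    (hz : z ∈ (Pt ht r x).support) (hd : T.dist r y = T.dist r z) : y = z := by
  rw [← Pt_getVert_of_mem ht hy, ← Pt_getVert_of_mem ht hz, hd]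

lemma Pt_mem_of_dist_le (ht : T.IsTree) {z x y : ι} (hx : x ∈ (Pt ht r z).support)
    (hy : y ∈ (Pt ht r z).support) (hd : T.dist r x ≤ T.dist r y) :
    x ∈ (Pt ht r y).support := by
  rw [← Pt_takeUntil ht hy]
  have hlen := Pt_len_takeUntil ht hy
  refine Walk.mem_support_iff_exists_getVert.2 ⟨T.dist r x, ?_, by omega⟩
  rw [getVert_takeUntil' hy (by omega), Pt_getVert_of_mem ht hx]

lemma Pt_support_subset (ht : T.IsTree) {x y : ι} (hy : y ∈ (Pt ht r x).support) :
    (Pt ht r y).support ⊆ (Pt ht r x).support := by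
  rw [← Pt_takeUntil ht hy]
  exact Walk.support_takeUntil_subset _ _

lemma Pt_subset_walk (ht : T.IsTree) {x : ι} (W : T.Walk r x) :
    (Pt ht r x).support ⊆ W.support := by
  rw [← Pt_uniq ht W.bypass_isPath]
  exact Walk.support_bypass_subset W

end TreeLemmas

section Decomp

variable {V ι : Type*} [Fintype V] [Fintype ι] [DecidableEq V] [DecidableEq ι]
  {G : SimpleGraph V} {T : SimpleGraph ι} {r : ι} {h k : ℕ}
  (td : RootedTreeDecomp G T r h k)

lemma homeSpec (v : V) :
    ∃ x, v ∈ td.bag x ∧ ∀ y, v ∈ td.bag y → T.dist r x ≤ T.dist r y := by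
  obtain ⟨b, hb, hmin⟩ := Finset.exists_min_image
    (Finset.univ.filter fun x => v ∈ td.bag x) (fun x => T.dist r x)
    (by obtain ⟨x, hx⟩ := td.vert_cover v; exact ⟨x, by simp [hx]⟩)
  exact ⟨b, by simpa using hb, fun y hy => hmin y (by simp [hy])⟩

noncomputable def home (v : V) : ι := (homeSpec td v).choose

lemma home_mem (v : V) : v ∈ td.bag (home td v) := (homeSpec td v).choose_spec.1

lemma home_min {v : V} {y : ι} (hy : v ∈ td.bag y) :
    T.dist r (home td v) ≤ T.dist r y := (homeSpec td v).choose_spec.2 y hy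

lemma bag_path {v : V} {x y : ι} (hx : v ∈ td.bag x) (hy : v ∈ td.bag y) :
    ∃ q : T.Walk x y, q.IsPath ∧ ∀ z ∈ q.support, v ∈ td.bag z := by
  obtain ⟨p, hp⟩ := td.bag_connected v x y hx hy
  exact ⟨p.bypass, p.bypass_isPath, fun z hz => hp z (Walk.support_bypass_subset p hz)⟩

lemma home_unique {v : V} {y : ι} (hv : v ∈ td.bag y)
    (hd : T.dist r y = T.dist r (home td v)) : y = home td v := by
  set ht := td.isTree with hht
  set m := home td v with hm
  by_cases h0 : T.dist r m = 0
  · rw [← (ht.isConnected.dist_eq_zero_iff).1 (by omega : T.dist r y = 0),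
      ← (ht.isConnected.dist_eq_zero_iff).1 h0]
  by_contra hne
  obtain ⟨Q, hQpath, hQbag⟩ := bag_path td (home_mem td v) hv   -- Walk m y
  have hsub : ∀ z ∈ (Pt ht r y).support, z ∈ (Pt ht r m).support ∨ z ∈ Q.support := by
    intro z hz
    have := Pt_subset_walk ht ((Pt ht r m).append Q) hz
    rw [Walk.support_append] at this
    rcases List.mem_append.1 this with h' | h'
    · exact Or.inl h'
    · exact Or.inr (List.mem_of_mem_tail h')
  have hQdist : ∀ z ∈ Q.support, T.dist r m ≤ T.dist r z :=
    fun z hz => home_min td (hQbag z hz)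
  have hylen : (Pt ht r y).length = T.dist r y := Pt_length ht y
  set c := (Pt ht r y).getVert (T.dist r m - 1) with hc
  have hcmemy : c ∈ (Pt ht r y).support :=
    Walk.mem_support_iff_exists_getVert.2 ⟨T.dist r m - 1, rfl, by omega⟩
  have hcdist : T.dist r c = T.dist r m - 1 := Pt_getVert_dist ht (by omega)
  have hcmemm : c ∈ (Pt ht r m).support := by
    rcases hsub c hcmemy with h' | h'
    · exact h'
    · exact absurd (hQdist c h') (by omega)
  have hcQ : c ∉ Q.support := fun h' => absurd (hQdist c h') (by omega)
  have hmlen : (Pt ht r m).length = T.dist r m := Pt_length ht m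
  have hadj1 : T.Adj c m := by
    have h1 : (Pt ht r m).getVert (T.dist r m - 1) = c := by
      rw [← hcdist, Pt_getVert_of_mem ht hcmemm]
    have h2 : (Pt ht r m).getVert (T.dist r m - 1 + 1) = m := by
      rw [(by omega : T.dist r m - 1 + 1 = T.dist r m), ← hmlen, Walk.getVert_length]
    have := (Pt ht r m).adj_getVert_succ (i := T.dist r m - 1) (by omega)
    rwa [h1, h2] at this
  have hadj2 : T.Adj c y := by
    have h2 : (Pt ht r y).getVert (T.dist r m - 1 + 1) = y := by
      rw [(by omega : T.dist r m - 1 + 1 = T.dist r m), ← hd, ← hylen, Walk.getVert_length]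
    have := (Pt ht r y).adj_getVert_succ (i := T.dist r m - 1) (by omega)
    rwa [← hc, h2] at this
  have hQ' : (Q.concat hadj2.symm).IsPath := isPath_concat' hQpath hadj2.symm hcQ
  have hcyc : (Walk.cons hadj1 (Q.concat hadj2.symm)).IsCycle := by
    rw [Walk.cons_isCycle_iff]
    refine ⟨hQ', ?_⟩
    rw [Walk.edges_concat]
    intro hmem
    rw [List.concat_eq_append] at hmem
    rcases List.mem_append.1 hmem with h' | h'
    · exact hcQ (Walk.fst_mem_support_of_mem_edges Q h')
    · rw [List.mem_singleton, Sym2.eq_iff] at h'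
      rcases h' with ⟨h1, h2⟩ | ⟨h1, h2⟩
      · rw [h1] at hcdist; omega
      · exact hne h2.symm
  exact ht.IsAcyclic _ hcyc

lemma home_on {v : V} {x : ι} (hv : v ∈ td.bag x) :
    home td v ∈ (Pt td.isTree r x).support := by
  set ht := td.isTree with hht
  set m := home td v with hm
  have hdle : T.dist r m ≤ T.dist r x := home_min td hv
  obtain ⟨Q, hQpath, hQbag⟩ := bag_path td (home_mem td v) hv   -- Walk m x
  have hxlen : (Pt ht r x).length = T.dist r x := Pt_length ht x
  set u := (Pt ht r x).getVert (T.dist r m) with hu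
  have humem : u ∈ (Pt ht r x).support :=
    Walk.mem_support_iff_exists_getVert.2 ⟨T.dist r m, rfl, by omega⟩
  have hudist : T.dist r u = T.dist r m := Pt_getVert_dist ht (by omega)
  have hsub : ∀ z ∈ (Pt ht r x).support, z ∈ (Pt ht r m).support ∨ z ∈ Q.support := by
    intro z hz
    have := Pt_subset_walk ht ((Pt ht r m).append Q) hz
    rw [Walk.support_append] at this
    rcases List.mem_append.1 this with h' | h'
    · exact Or.inl h'
    · exact Or.inr (List.mem_of_mem_tail h')
  rcases hsub u humem with h' | h'
  · have : u = m := Pt_dist_inj ht h' (Walk.end_mem_support _)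
      (by rw [hudist])
    rwa [← this]
  · have : u = m := home_unique td (hQbag u h') (by rw [hudist])
    rwa [← this]


noncomputable def idx (v : V) : ℕ :=
  (Finset.univ.filter (fun u => home td u = home td v)).toList.idxOf v

lemma mem_idx_list (v : V) :
    v ∈ (Finset.univ.filter (fun u => home td u = home td v)).toList := by
  simp [Finset.mem_toList]

lemma idx_lt (v : V) : idx td v < k := by
  have h1 : idx td v < (Finset.univ.filter (fun u => home td u = home td v)).toList.length :=
    List.idxOf_lt_length_iff.2 (mem_idx_list td v)
  rw [Finset.length_toList] at h1
  have h2 : (Finset.univ.filter (fun u => home td u = home td v)) ⊆ td.bag (home td v) := by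
    intro u hu
    have := (Finset.mem_filter.1 hu).2
    rw [← this]
    exact home_mem td u
  have := Finset.card_le_card h2
  have := td.bag_card (home td v)
  omega

lemma idx_inj {u v : V} (hh : home td u = home td v) (hi : idx td u = idx td v) : u = v := by
  have he : (Finset.univ.filter (fun a => home td a = home td u))
      = (Finset.univ.filter (fun a => home td a = home td v)) := by
    rw [hh]
  unfold idx at hi
  rw [he] at hi
  exact (List.idxOf_inj (l := (Finset.univ.filter (fun a => home td a = home td v)).toList)
    (by rw [← he]; exact mem_idx_list td u)).1 hi

noncomputable def keyf (v : V) : ℕ := k * T.dist r (home td v) + idx td v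

lemma key_lt_of_dist_lt {u v : V}
    (hd : T.dist r (home td u) < T.dist r (home td v)) : keyf td u < keyf td v := by
  have h1 : idx td u < k := idx_lt td u
  have h2 : k * (T.dist r (home td u) + 1) ≤ k * T.dist r (home td v) :=
    Nat.mul_le_mul_left k (by omega)
  rw [Nat.mul_succ] at h2
  unfold keyf
  omega

lemma dist_le_of_key_le {u v : V} (hk : keyf td u ≤ keyf td v) :
    T.dist r (home td u) ≤ T.dist r (home td v) := by
  by_contra hc
  push_neg at hc
  have := key_lt_of_dist_lt td hc
  omega

lemma key_inj {u v : V} {z : ι} (hu : home td u ∈ (Pt td.isTree r z).support)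
    (hv : home td v ∈ (Pt td.isTree r z).support) (he : keyf td u = keyf td v) : u = v := by
  have hdd : T.dist r (home td u) = T.dist r (home td v) :=
    le_antisymm (dist_le_of_key_le td he.le) (dist_le_of_key_le td he.ge)
  have hh : home td u = home td v := Pt_dist_inj td.isTree hu hv hdd
  have hii : idx td u = idx td v := by
    unfold keyf at he
    rw [hdd] at he
    omega
  exact idx_inj td hh hii

noncomputable def Af (v : V) : Finset V :=
  Finset.univ.filter
    (fun u => home td u ∈ (Pt td.isTree r (home td v)).support ∧ keyf td u < keyf td v)

lemma mem_Af {u v : V} : u ∈ Af td v ↔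
    home td u ∈ (Pt td.isTree r (home td v)).support ∧ keyf td u < keyf td v := by
  simp [Af]

noncomputable def par (v : V) : Option V :=
  if hA : (Af td v).Nonempty then some ((Af td v).exists_max_image (keyf td) hA).choose
  else none

lemma par_some {v : V} (hA : (Af td v).Nonempty) : ∃ w, par td v = some w := by
  unfold par
  rw [dif_pos hA]
  exact ⟨_, rfl⟩

lemma par_eq_none {v : V} (hp : par td v = none) : Af td v = ∅ := by
  by_contra hne
  obtain ⟨w, hw⟩ := par_some td (Finset.nonempty_iff_ne_empty.2 hne)
  rw [hp] at hw
  simp at hw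

lemma par_spec {v w : V} (hp : par td v = some w) :
    w ∈ Af td v ∧ ∀ u ∈ Af td v, keyf td u ≤ keyf td w := by
  unfold par at hp
  split_ifs at hp with hA
  obtain ⟨hw1, hw2⟩ := ((Af td v).exists_max_image (keyf td) hA).choose_spec
  injection hp with hp
  rw [← hp]
  exact ⟨hw1, hw2⟩


lemma A_erase {v w : V} (hp : par td v = some w) : Af td w = (Af td v).erase w := by
  obtain ⟨hwA, hwmax⟩ := par_spec td hp
  obtain ⟨hw1, hw2⟩ := (mem_Af td).1 hwA
  ext u
  rw [Finset.mem_erase, mem_Af, mem_Af]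
  constructor
  · rintro ⟨h1, h2⟩
    refine ⟨fun he => by rw [he] at h2; omega, ?_, by omega⟩
    exact Pt_support_subset td.isTree hw1 h1
  · rintro ⟨hne, h1, h2⟩
    have hle : keyf td u ≤ keyf td w := hwmax u ((mem_Af td).2 ⟨h1, h2⟩)
    have hne' : keyf td u ≠ keyf td w := fun he => hne (key_inj td h1 hw1 he)
    refine ⟨Pt_mem_of_dist_le td.isTree h1 hw1 (dist_le_of_key_le td hle), by omega⟩

lemma anc : ∀ (n : ℕ) (v u : V), (Af td v).card ≤ n → u ∈ Af td v →
    IsAncestor (par td) v u := by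
  intro n
  induction n with
  | zero =>
    intro v u hn hu
    have := Finset.card_pos.2 ⟨u, hu⟩
    omega
  | succ n ih =>
    intro v u hn hu
    have hA : (Af td v).Nonempty := ⟨u, hu⟩
    obtain ⟨w, hw⟩ := par_some td hA
    by_cases he : u = w
    · rw [he]
      exact Relation.ReflTransGen.single hw
    · have hu' : u ∈ Af td w := by
        rw [A_erase td hw]
        exact Finset.mem_erase.2 ⟨he, hu⟩
      have hcard : (Af td w).card ≤ n := by
        rw [A_erase td hw, Finset.card_erase_of_mem (par_spec td hw).1]
        have := Finset.card_pos.2 hA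
        omega
      exact Relation.ReflTransGen.head hw (ih w u hcard hu')

end Decomp


theorem stmt7 {V ι : Type*} [Fintype V] [Fintype ι] [DecidableEq V]
    (G : SimpleGraph V) (T : SimpleGraph ι) (r : ι) (h k : ℕ)
    (td : RootedTreeDecomp G T r h k) :
    Nonempty (ElimForest V G.Adj (k * (h + 1))) := by
  classical
  refine ⟨⟨fun v => par td v, fun v => (Af td v).card, ?_, ?_, ?_, ?_⟩⟩
  · intro v
    have hcard : (Af td v).card ≤ keyf td v := by
      have := Finset.card_le_card_of_injOn (s := Af td v)
        (t := Finset.range (keyf td v)) (keyf td)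
        (fun u hu => Finset.mem_range.2 ((mem_Af td).1 hu).2)
        (fun a ha b hb he => key_inj td ((mem_Af td).1 (Finset.mem_coe.1 ha)).1
          ((mem_Af td).1 (Finset.mem_coe.1 hb)).1 he)
      simpa using this
    have h1 : idx td v < k := idx_lt td v
    have h2 : T.dist r (home td v) ≤ h := td.height_le (home td v)
    refine le_of_lt ?_
    calc (Af td v).card ≤ keyf td v := hcard
      _ < k * (T.dist r (home td v) + 1) := by
          have h4 : keyf td v = k * T.dist r (home td v) + idx td v := rfl
          rw [Nat.mul_succ, h4]
          omega
      _ ≤ k * (h + 1) := Nat.mul_le_mul_left k (by omega)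
  · intro v hnone
    rw [par_eq_none td hnone, Finset.card_empty]
  · intro v w hp
    have hmem := (par_spec td hp).1
    rw [A_erase td hp, Finset.card_erase_of_mem hmem]
    have := Finset.card_pos.2 ⟨w, hmem⟩
    omega
  · intro v w hadj
    obtain ⟨x, hvx, hwx⟩ := td.edge_cover v w hadj
    have hvP := home_on td hvx
    have hwP := home_on td hwx
    have hne : keyf td v ≠ keyf td w := fun he => hadj.ne (key_inj td hvP hwP he)
    have hmem : ∀ a b : V, a ∈ td.bag x → b ∈ td.bag x → keyf td b < keyf td a →
        IsAncestor (par td) a b := by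
      intro a b ha hb hk'
      have haP := home_on td ha
      have hbP := home_on td hb
      have hbA : b ∈ Af td a := (mem_Af td).2
        ⟨Pt_mem_of_dist_le td.isTree hbP haP (dist_le_of_key_le td hk'.le), hk'⟩
      exact anc td _ a b le_rfl hbA
    rcases Nat.lt_or_ge (keyf td v) (keyf td w) with h' | h'
    · exact Or.inr (hmem w v hwx hvx h')
    · exact Or.inl (hmem v w hvx hwx (lt_of_le_of_ne h' hne.symm))
end

section
/- Let G be a finite stop parity game with a player-aware coloring χ : V → C = C_E ⊎ C_O, let v be a vertex, and let A be a set of enforcements that is valid for v in G. Then player E has a winning strategy from v in the ordinary parity game on G's arena if and only if A contains an enforcement P whose domain contains no color of C_E. -/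
open Classical

/-- The `⪯`-minimum of a set of naturals, when it exists. -/
noncomputable def pmin (S : Set ℕ) : Option ℕ :=
  if h : ∃ m ∈ S, ∀ x ∈ S, preceq m x then some h.choose else none

/-- An arena: a directed graph with vertices partitioned between the players;
`owner u = true` means `u` belongs to player E. -/
structure Arena (V : Type*) where
  owner : V → Bool
  edge : V → V → Prop

/-- A strategy for player E in a stop parity game on arena `A`: to every finite
history (the list of previously visited vertices) and current vertex `u ∈ V_E` it
assigns either a vertex `w` with `edge u w` (`some w`) or the move STOP (`none`). -/
structure EStrategy {V : Type*} (A : Arena V) where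
  move : List V → V → Option V
  legal : ∀ h u w, move h u = some w → A.edge u w

/-- A play from `v` in the stop parity game on arena `A`: a maximal sequence of
vertices starting at `v` and following edges; a finite play either is ended
by the STOP move of player E at one of his vertices (`stopped = true`) or ends at
a vertex with no outgoing edges (`stopped = false`). -/
structure Play {V : Type*} (A : Arena V) (v : V) where
  seq : ℕ → Option V
  stopped : Bool
  start : seq 0 = some v
  none_succ : ∀ n, seq n = none → seq (n + 1) = none
  step : ∀ n u w, seq n = some u → seq (n + 1) = some w → A.edge u w
  maximal : ∀ n u, seq n = some u → seq (n + 1) = none →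
    (stopped = true ∧ A.owner u = true) ∨ (stopped = false ∧ ∀ w, ¬ A.edge u w)

/-- The history of a play before position `n` (the list of its first `n` vertices). -/
def Play.hist {V : Type*} {A : Arena V} {v : V} (p : Play A v) (n : ℕ) : List V :=
  (List.range n).filterMap p.seq

/-- A play is consistent with a strategy `ρ` of player E if every move made from a
vertex of player E is the one prescribed by `ρ` (where `ρ` prescribing `none` means
that the play is ended by STOP). -/
def ConsistentWith {V : Type*} {A : Arena V} {v : V} (ρ : EStrategy A) (p : Play A v) :
    Prop :=
  ∀ n u, p.seq n = some u → A.owner u = true →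
    p.seq (n + 1) = ρ.move (p.hist n) u ∧ (p.seq (n + 1) = none → p.stopped = true)

/-- A play is finite if its sequence is eventually `none`. -/
def Play.IsFinite {V : Type*} {A : Arena V} {v : V} (p : Play A v) : Prop :=
  ∃ n, p.seq n = none

/-- A play ended by the STOP move. -/
def Play.EndedByStop {V : Type*} {A : Arena V} {v : V} (p : Play A v) : Prop :=
  p.IsFinite ∧ p.stopped = true

/-- The maximum rank occurring infinitely often on a play. -/
noncomputable def infRank {V : Type*} {A : Arena V} {v : V} (rank : V → ℕ)
    (p : Play A v) : ℕ :=
  sSup {r | ∀ N, ∃ n, N ≤ n ∧ ∃ u, p.seq n = some u ∧ rank u = r}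

/-- Player O wins a play: it is finite, not ended by STOP, and ends at a vertex of
player E, or it is infinite and the maximum rank occurring infinitely often is odd. -/
def OWinsPlay {V : Type*} {A : Arena V} {v : V} (rank : V → ℕ) (p : Play A v) : Prop :=
  (∃ n u, p.seq n = some u ∧ p.seq (n + 1) = none ∧ p.stopped = false ∧
    A.owner u = true) ∨
  ((∀ n, p.seq n ≠ none) ∧ Odd (infRank rank p))

/-- Player E wins a play: it is finite, not ended by STOP, and ends at a vertex of
player O, or it is infinite and the maximum rank occurring infinitely often is even. -/
def EWinsPlay {V : Type*} {A : Arena V} {v : V} (rank : V → ℕ) (p : Play A v) : Prop :=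
  (∃ n u, p.seq n = some u ∧ p.seq (n + 1) = none ∧ p.stopped = false ∧
    A.owner u = false) ∨
  ((∀ n, p.seq n ≠ none) ∧ Even (infRank rank p))

/-- A strategy is safe from `v` if no play from `v` consistent with it is won by O. -/
def SafeFrom {V : Type*} (A : Arena V) (rank : V → ℕ) (ρ : EStrategy A) (v : V) : Prop :=
  ∀ p : Play A v, ConsistentWith ρ p → ¬ OWinsPlay rank p

/-- A strategy is winning from `v` if every play from `v` consistent with it is won
by E. -/
def WinningFrom {V : Type*} (A : Arena V) (rank : V → ℕ) (ρ : EStrategy A) (v : V) :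
    Prop :=
  ∀ p : Play A v, ConsistentWith ρ p → EWinsPlay rank p

/-- A strategy of the ordinary parity game: it never plays STOP when an outgoing
edge exists. -/
def NonStopping {V : Type*} {A : Arena V} (ρ : EStrategy A) : Prop :=
  ∀ h u, A.owner u = true → (∃ w, A.edge u w) → ρ.move h u ≠ none

/-- A strategy is positional if its move depends only on the current vertex. -/
def Positional {V : Type*} {A : Arena V} (ρ : EStrategy A) : Prop :=
  ∀ h h' u, ρ.move h u = ρ.move h' u

/-- `ConsPath A ρ v h u`: starting at `v` there is a finite prefix of a play
consistent with `ρ` whose already-visited vertices are `h` and whose current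
(last) vertex is `u`; the full prefix is `h ++ [u]`. -/
inductive ConsPath {V : Type*} (A : Arena V) (ρ : EStrategy A) (v : V) :
    List V → V → Prop
  | refl : ConsPath A ρ v [] v
  | stepO (h : List V) (u w : V) :
      ConsPath A ρ v h u → A.owner u = false → A.edge u w → ConsPath A ρ v (h ++ [u]) w
  | stepE (h : List V) (u w : V) :
      ConsPath A ρ v h u → A.owner u = true → ρ.move h u = some w →
      ConsPath A ρ v (h ++ [u]) w

/-- The maximum rank of a vertex on a finite prefix of a play. -/
def maxRank {V : Type*} (rank : V → ℕ) (l : List V) : ℕ := (l.map rank).foldr max 0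

/-- The enforcement `Φ(G, ρ, v)` of a strategy `ρ` from a vertex `v` in the stop
parity game with player-aware coloring `χ`: its value at a color `c` is the
`⪯`-minimum of the maximum ranks of finite prefixes of plays from `v` consistent
with `ρ` that end at a vertex `w` of color `c`, where for `w ∈ V_E` only prefixes
at which `ρ` answers STOP are considered (undefined if there is no such prefix). -/
noncomputable def Phi {V C : Type*} (A : Arena V) (rank : V → ℕ) (χ : V → C)
    (ρ : EStrategy A) (v : V) : C → Option ℕ :=
  fun c => pmin {r | ∃ (w : V) (h : List V), χ w = c ∧ ConsPath A ρ v h w ∧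
    (A.owner w = true → ρ.move h w = none) ∧ r = maxRank rank (h ++ [w])}

/-- A set `S` of enforcements is valid for `v`: sound, complete and up-closed. -/
def ValidFamily {V C : Type*} (A : Arena V) (rank : V → ℕ) (χ : V → C) (v : V)
    (S : Set (C → Option ℕ)) : Prop :=
  (∀ P ∈ S, ∃ ρ : EStrategy A, SafeFrom A rank ρ v ∧ esub (Phi A rank χ ρ v) P) ∧
  (∀ ρ : EStrategy A, Positional ρ → SafeFrom A rank ρ v → Phi A rank χ ρ v ∈ S) ∧
  (∀ P ∈ S, ∀ Q, esub P Q → Q ∈ S)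

/-- The arena obtained by adding a directed edge from every vertex of color `s` to
every vertex of color `t`. -/
def addEdges {V C : Type*} (A : Arena V) (χ : V → C) (s t : C) : Arena V where
  owner := A.owner
  edge := fun u w => A.edge u w ∨ (χ u = s ∧ χ w = t)


section Helpers
variable {α : Type*}

lemma maxRank_cons {rank : α → ℕ} {x : α} {l : List α} :
    maxRank rank (x :: l) = max (rank x) (maxRank rank l) := rfl

lemma maxRank_le {rank : α → ℕ} {l : List α} {r : ℕ} (h : ∀ x ∈ l, rank x ≤ r) :
    maxRank rank l ≤ r := by
  induction l with
  | nil => exact Nat.zero_le r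
  | cons a l ih =>
      rw [maxRank_cons]
      exact max_le (h a (by simp)) (ih fun x hx => h x (by simp [hx]))

lemma le_maxRank {rank : α → ℕ} {l : List α} {x : α} (h : x ∈ l) :
    rank x ≤ maxRank rank l := by
  induction l with
  | nil => simp at h
  | cons a l ih =>
      rw [maxRank_cons]
      rcases List.mem_cons.1 h with h | h
      · subst h; exact le_max_left _ _
      · exact le_trans (ih h) (le_max_right _ _)

lemma maxRank_congr {f g : α → ℕ} {l : List α} (h : ∀ x ∈ l, f x = g x) :
    maxRank f l = maxRank g l := by
  induction l with
  | nil => rfl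
  | cons a l ih =>
      rw [maxRank_cons, maxRank_cons, h a (by simp), ih fun x hx => h x (by simp [hx])]

lemma chain_all_closed {R : α → α → Prop} {Q : α → Prop}
    (hcl : ∀ a, Q a → ∀ b, R a b → Q b) :
    ∀ {u : α} {l : List α}, List.Chain R u l → Q u → ∀ x ∈ l, Q x := by
  intro u l
  induction l generalizing u with
  | nil => intro _ _ x hx; simp at hx
  | cons b l ih =>
      intro hc hu x hx
      rw [List.Chain, List.chain_cons] at hc
      have hb : Q b := hcl u hu b hc.1
      rcases List.mem_cons.1 hx with h | h
      · subst h; exact hb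
      · exact ih hc.2 hb x h

lemma chain_imp_mem {R S : α → α → Prop} {Q : α → Prop}
    (h : ∀ x y, Q x → Q y → R x y → S x y) :
    ∀ {u : α} {l : List α}, List.Chain R u l → Q u → (∀ x ∈ l, Q x) → List.Chain S u l := by
  intro u l
  induction l generalizing u with
  | nil => intro _ _ _; exact List.Chain.nil
  | cons b l ih =>
      intro hc hu hl
      rw [List.Chain, List.chain_cons] at hc ⊢
      exact ⟨h u b hu (hl b (by simp)) hc.1,
        ih hc.2 (hl b (by simp)) fun x hx => hl x (by simp [hx])⟩

lemma chain_succ_of_mem {R : α → α → Prop} :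
    ∀ {u : α} {l : List α}, List.Chain R u l → ∀ x ∈ u :: l,
      x = (u :: l).getLast (by simp) ∨ ∃ y ∈ l, R x y := by
  intro u l
  induction l generalizing u with
  | nil => intro _ x hx; left; simp at hx ⊢; exact hx
  | cons b l ih =>
      intro hc x hx
      rw [List.Chain, List.chain_cons] at hc
      rcases List.mem_cons.1 hx with h | h
      · subst h; right; exact ⟨b, by simp, hc.1⟩
      · rcases ih hc.2 x h with h' | ⟨y, hy, hR⟩
        · left
          rw [List.getLast_cons (by simp : (b :: l) ≠ [])]
          exact h'
        · right; exact ⟨y, by simp [hy], hR⟩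

lemma cycle_succ {R : α → α → Prop} {u : α} {l : List α} (hne : l ≠ [])
    (hc : List.Chain R u l) (hl : l.getLast? = some u) :
    ∀ x ∈ u :: l, ∃ y ∈ u :: l, R x y := by
  intro x hx
  rcases chain_succ_of_mem hc x hx with h | ⟨y, hy, hR⟩
  · -- x is the last, which equals u
    have hlast : (u :: l).getLast (by simp) = u := by
      rw [List.getLast_cons hne]
      have := List.getLast?_eq_getLast (l := l) hne
      rw [this] at hl; exact Option.some.inj hl
    rw [h, hlast]
    cases l with
    | nil => exact absurd rfl hne
    | cons b l' =>
        rw [List.Chain, List.chain_cons] at hc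
        exact ⟨b, by simp, hc.1⟩
  · exact ⟨y, by simp [hy], hR⟩

lemma cycle_mem_start {R : α → α → Prop} {Q : α → Prop}
    (hcl : ∀ a, Q a → ∀ b, R a b → Q b)
    {u : α} {l : List α} (hc : List.Chain R u l) (hl : l.getLast? = some u)
    {x : α} (hx : x ∈ u :: l) (hQ : Q x) : Q u := by
  rcases List.mem_cons.1 hx with h | h
  · subst h; exact hQ
  · obtain ⟨l₁, l₂, rfl⟩ := List.append_of_mem h
    have hc2 : List.Chain R x l₂ := (List.isChain_cons_split.1 hc).2
    cases l₂ with
    | nil =>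
        have : (l₁ ++ [x]).getLast? = some u := by simpa using hl
        rw [List.getLast?_concat] at this
        rw [← Option.some.inj this]; exact hQ
    | cons b l₃ =>
        have hQall := chain_all_closed hcl hc2 hQ
        have : u ∈ b :: l₃ := by
          rw [List.getLast?_append, List.getLast?_cons_cons,
            List.getLast?_eq_getLast (l := b :: l₃) (by simp)] at hl
          simp only [Option.some_or] at hl
          rw [← Option.some.inj hl]
          exact List.getLast_mem _
        exact hQall u this

lemma chain_range_map {R : α → α → Prop} {g : ℕ → α} (h : ∀ n, R (g n) (g (n + 1))) :
    ∀ (k a : ℕ), List.Chain R (g a) ((List.range k).map fun i => g (a + 1 + i)) := by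
  intro k
  induction k with
  | zero => intro a; simp [List.Chain]
  | succ k ih =>
      intro a
      rw [List.range_succ_eq_map]
      simp only [List.map_cons, List.map_map]
      rw [List.Chain, List.chain_cons, ← List.Chain]
      constructor
      · simpa using h a
      · have := ih (a + 1)
        convert this using 2
        funext i
        simp only [Function.comp]
        congr 1
        omega

lemma getLast?_range_map {g : ℕ → α} {k a : ℕ} (hk : k ≠ 0) :
    ((List.range k).map fun i => g (a + 1 + i)).getLast? = some (g (a + k)) := by
  obtain ⟨k', rfl⟩ := Nat.exists_eq_succ_of_ne_zero hk
  rw [List.range_succ, List.map_append]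
  simp only [List.map_cons, List.map_nil]
  rw [List.getLast?_concat]
  congr 2
  omega

end Helpers

section Attractor
variable {V : Type*} [Fintype V]

def attrIter (owner : V → Bool) (E : V → V → Prop) (c : Bool) (U : Finset V)
    (T : Set V) : ℕ → Set V
  | 0 => T
  | n + 1 => attrIter owner E c U T n ∪ {u | u ∈ U ∧
      (if owner u = c then ∃ w, E u w ∧ w ∈ attrIter owner E c U T n
       else ∀ w, E u w → w ∈ U → w ∈ attrIter owner E c U T n)}

def AttrS (owner : V → Bool) (E : V → V → Prop) (c : Bool) (U : Finset V)
    (T : Set V) : Set V := {u | ∃ n, u ∈ attrIter owner E c U T n}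

noncomputable def alevel (owner : V → Bool) (E : V → V → Prop) (c : Bool)
    (U : Finset V) (T : Set V) (u : V) : ℕ :=
  if h : u ∈ AttrS owner E c U T then Nat.find h else 0

noncomputable def attStrat (owner : V → Bool) (E : V → V → Prop) (c : Bool)
    (U : Finset V) (T : Set V) (u : V) : V :=
  if h : ∃ w, E u w ∧ w ∈ attrIter owner E c U T (alevel owner E c U T u - 1)
    then h.choose else u

variable {owner : V → Bool} {E : V → V → Prop} {c : Bool} {U : Finset V} {T : Set V}

omit [Fintype V] in
lemma attrIter_mono : ∀ {m n : ℕ}, m ≤ n →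
    attrIter owner E c U T m ⊆ attrIter owner E c U T n := by
  intro m n h
  induction n with
  | zero => rw [Nat.le_zero.1 h]
  | succ n ih =>
      rcases Nat.lt_or_ge m (n+1) with h' | h'
      · exact fun x hx => Or.inl (ih (Nat.lt_succ_iff.1 h') hx)
      · rw [Nat.le_antisymm h h']

omit [Fintype V] in
lemma attrIter_subset_U (hT : T ⊆ ↑U) : ∀ {n : ℕ}, attrIter owner E c U T n ⊆ ↑U := by
  intro n
  induction n with
  | zero => exact hT
  | succ n ih =>
      rintro x (hx | hx)
      · exact ih hx
      · exact hx.1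

omit [Fintype V] in
lemma base_subset_attr : T ⊆ AttrS owner E c U T := fun x hx => ⟨0, hx⟩

omit [Fintype V] in
lemma alevel_le {u : V} {n : ℕ} (h : u ∈ attrIter owner E c U T n) :
    alevel owner E c U T u ≤ n := by
  rw [alevel, dif_pos ⟨n, h⟩]
  exact Nat.find_min' _ h

omit [Fintype V] in
lemma mem_attrIter_alevel {u : V} (h : u ∈ AttrS owner E c U T) :
    u ∈ attrIter owner E c U T (alevel owner E c U T u) := by
  rw [alevel, dif_pos h]
  exact Nat.find_spec h

omit [Fintype V] in
lemma attr_progress {u : V} (hu : u ∈ AttrS owner E c U T) (hT : u ∉ T) :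
    u ∈ U ∧ 0 < alevel owner E c U T u ∧
      (if owner u = c
        then ∃ w, E u w ∧ w ∈ attrIter owner E c U T (alevel owner E c U T u - 1)
        else ∀ w, E u w → w ∈ U → w ∈ attrIter owner E c U T (alevel owner E c U T u - 1)) := by
  have hmem : u ∈ attrIter owner E c U T (alevel owner E c U T u) := mem_attrIter_alevel hu
  have hLpos : 0 < alevel owner E c U T u := by
    rcases Nat.eq_zero_or_pos (alevel owner E c U T u) with h0 | h
    · rw [h0] at hmem; exact absurd hmem hT
    · exact h
  obtain ⟨k, hk⟩ := Nat.exists_eq_succ_of_ne_zero (Nat.pos_iff_ne_zero.1 hLpos)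
  have hnot : u ∉ attrIter owner E c U T k := by
    intro hx
    have := alevel_le hx
    omega
  rw [hk] at hmem
  rcases hmem with hmem | hmem
  · exact absurd hmem hnot
  · refine ⟨hmem.1, hLpos, ?_⟩
    have heq : alevel owner E c U T u - 1 = k := by omega
    rw [heq]
    exact hmem.2

lemma attStrat_spec {u : V} (hu : u ∈ AttrS owner E c U T) (hT : u ∉ T)
    (hc : owner u = c) :
    E u (attStrat owner E c U T u) ∧
      attStrat owner E c U T u ∈ attrIter owner E c U T (alevel owner E c U T u - 1) := by
  have h := (attr_progress hu hT).2.2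
  rw [if_pos hc] at h
  rw [attStrat, dif_pos h]
  exact h.choose_spec

omit [Fintype V] in
lemma not_attr_own {u w : V} (hna : u ∉ AttrS owner E c U T) (huU : u ∈ U)
    (hc : owner u = c) (hE : E u w) : w ∉ AttrS owner E c U T := by
  rintro ⟨n, hn⟩
  exact hna ⟨n + 1, Or.inr ⟨huU, by rw [if_pos hc]; exact ⟨w, hE, hn⟩⟩⟩

lemma not_attr_opp {u : V} (hna : u ∉ AttrS owner E c U T) (huU : u ∈ U)
    (hc : ¬ owner u = c) : ∃ w, E u w ∧ w ∈ U ∧ w ∉ AttrS owner E c U T := by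
  by_contra hno
  push_neg at hno
  apply hna
  refine ⟨Finset.univ.sup (alevel owner E c U T) + 1, Or.inr ⟨huU, ?_⟩⟩
  rw [if_neg hc]
  intro w hw hwU
  have hwA := hno w hw hwU
  exact attrIter_mono (Finset.le_sup (Finset.mem_univ w)) (mem_attrIter_alevel hwA)

lemma cycle_attr {R : V → V → Prop} {cyc : List V}
    (hsucc : ∀ x ∈ cyc, ∃ y ∈ cyc, R x y)
    (hdec : ∀ x ∈ cyc, x ∈ AttrS owner E c U T → x ∉ T → ∀ y ∈ cyc, R x y →
      y ∈ AttrS owner E c U T ∧ alevel owner E c U T y < alevel owner E c U T x)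
    (hx : ∃ x ∈ cyc, x ∈ AttrS owner E c U T) : ∃ x ∈ cyc, x ∈ T := by
  by_contra hno
  push_neg at hno
  obtain ⟨x0, hx0c, hx0a⟩ := hx
  classical
  set F := cyc.toFinset.filter (fun x => x ∈ AttrS owner E c U T) with hF
  have hFne : F.Nonempty := ⟨x0, by simp [hF, List.mem_toFinset, hx0c, hx0a]⟩
  obtain ⟨m, hm, hmin⟩ := Finset.exists_min_image F (alevel owner E c U T) hFne
  simp only [hF, Finset.mem_filter, List.mem_toFinset] at hm
  obtain ⟨y, hyc, hR⟩ := hsucc m hm.1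
  obtain ⟨hya, hlt⟩ := hdec m hm.1 hm.2 (hno m hm.1) y hyc hR
  have hyF : y ∈ F := by simp [hF, List.mem_toFinset, hyc, hya]
  have := hmin y hyF
  omega

end Attractor

section Zielonka
variable {V : Type*} [Fintype V]

def bpar (b : Bool) (n : ℕ) : Prop := if b then Even n else Odd n

def gstep (owner : V → Bool) (E : V → V → Prop) (b : Bool) (σ : V → V)
    (U : Finset V) (u w : V) : Prop :=
  w ∈ U ∧ (if owner u = b then w = σ u else E u w)

def StratWin (owner : V → Bool) (E : V → V → Prop) (rank : V → ℕ)
    (U : Finset V) (b : Bool) (σ : V → V) (W : Finset V) : Prop :=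
  W ⊆ U ∧
  (∀ u ∈ W, owner u = b → E u (σ u) ∧ σ u ∈ W) ∧
  (∀ u ∈ W, ¬ owner u = b → ∀ w ∈ U, E u w → w ∈ W) ∧
  (∀ u ∈ W, ∀ l, l ≠ [] → List.Chain (gstep owner E b σ U) u l →
    l.getLast? = some u → bpar b (maxRank rank (u :: l)))

omit [Fintype V] in
lemma stepClosed_of {owner : V → Bool} {E : V → V → Prop} {U : Finset V}
    {b : Bool} {σ : V → V} {W : Finset V}
    (h2 : ∀ u ∈ W, owner u = b → σ u ∈ W)
    (h3 : ∀ u ∈ W, ¬ owner u = b → ∀ w ∈ U, E u w → w ∈ W) :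
    ∀ u ∈ W, ∀ y, gstep owner E b σ U u y → y ∈ W := by
  intro u hu y hy
  obtain ⟨hyU, hy⟩ := hy
  by_cases hb : owner u = b
  · rw [if_pos hb] at hy; rw [hy]; exact h2 u hu hb
  · rw [if_neg hb] at hy; exact h3 u hu hb y hyU hy

omit [Fintype V] in
lemma bool_ne_iff {x y : Bool} : ¬ x = y ↔ x = !y := by cases x <;> cases y <;> simp

theorem zielonka (owner : V → Bool) (E : V → V → Prop) (rank : V → ℕ) :
    ∀ (N : ℕ) (U : Finset V), U.card ≤ N → (∀ u ∈ U, ∃ w, w ∈ U ∧ E u w) →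
    ∃ (f : Bool → Finset V) (st : Bool → V → V),
      f true ∪ f false = U ∧ Disjoint (f true) (f false) ∧
      ∀ c, StratWin owner E rank U c (st c) (f c) := by
  intro N
  induction N with
  | zero =>
      intro U hcard _
      have hU : U = ∅ := Finset.card_eq_zero.1 (Nat.le_zero.1 hcard)
      refine ⟨fun _ => ∅, fun _ u => u, by simp [hU], by simp, fun c => ?_⟩
      exact ⟨by simp, by simp, by simp, by simp⟩
  | succ N IH =>
      intro U hcard htot
      by_cases hUe : U = ∅
      · refine ⟨fun _ => ∅, fun _ u => u, by simp [hUe], by simp, fun c => ?_⟩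
        exact ⟨by simp, by simp, by simp, by simp⟩
      have hUne : U.Nonempty := Finset.nonempty_iff_ne_empty.2 hUe
      obtain ⟨d, hdmax, t0, ht0U, ht0⟩ :
          ∃ d, (∀ u ∈ U, rank u ≤ d) ∧ ∃ t0, t0 ∈ U ∧ rank t0 = d := by
        refine ⟨(U.image rank).max' (hUne.image rank),
          fun u hu => Finset.le_max' _ _ (Finset.mem_image_of_mem _ hu), ?_⟩
        obtain ⟨t0, h1, h2⟩ := Finset.mem_image.1 ((U.image rank).max'_mem (hUne.image rank))
        exact ⟨t0, h1, h2⟩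
      obtain ⟨b, hbd⟩ : ∃ b, bpar b d := by
        rcases Nat.even_or_odd d with h | h
        · exact ⟨true, by simpa [bpar] using h⟩
        · exact ⟨false, by simpa [bpar] using h⟩
      set T : Set V := {u | u ∈ U ∧ rank u = d} with hT
      have hTU : T ⊆ ↑U := fun x hx => hx.1
      set Att := AttrS owner E b U T with hAtt
      set A : Finset V := U.filter (fun u => u ∈ Att) with hA
      have hAU : A ⊆ U := Finset.filter_subset _ _
      have hTA : t0 ∈ A := by
        rw [hA, Finset.mem_filter]
        exact ⟨ht0U, base_subset_attr ⟨ht0U, ht0⟩⟩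
      have hcard' : (U \ A).card ≤ N := by
        have h1 : (U \ A).card < U.card :=
          Finset.card_lt_card (Finset.sdiff_ssubset hAU ⟨t0, hTA⟩)
        omega
      have hUA : ∀ u : V, u ∈ U \ A ↔ (u ∈ U ∧ u ∉ Att) := by
        intro u
        rw [Finset.mem_sdiff, hA, Finset.mem_filter]
        exact ⟨fun ⟨h1, h2⟩ => ⟨h1, fun h => h2 ⟨h1, h⟩⟩, fun ⟨h1, h2⟩ => ⟨h1, fun h => h2 h.2⟩⟩
      have htot' : ∀ u ∈ U \ A, ∃ w, w ∈ U \ A ∧ E u w := by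
        intro u hu
        obtain ⟨huU, huA⟩ := (hUA u).1 hu
        by_cases hob : owner u = b
        · obtain ⟨w, hwU, hwE⟩ := htot u huU
          exact ⟨w, (hUA w).2 ⟨hwU, not_attr_own huA huU hob hwE⟩, hwE⟩
        · obtain ⟨w, hwE, hwU, hwA⟩ := not_attr_opp huA huU hob
          exact ⟨w, (hUA w).2 ⟨hwU, hwA⟩, hwE⟩
      obtain ⟨f', st', hun', hdis', hsw'⟩ := IH (U \ A) hcard' htot'
      by_cases hWO : f' (!b) = ∅
      · -- Case 1 : player b wins everywhere on U
        have hfb : f' b = U \ A := by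
          cases b
          · simp only [Bool.not_false] at hWO
            rw [hWO, Finset.empty_union] at hun'; exact hun'
          · simp only [Bool.not_true] at hWO
            rw [hWO, Finset.union_empty] at hun'; exact hun'
        set σ₁ : V → V := fun u =>
          if u ∈ Att then
            (if u ∈ T then (if h : ∃ w, w ∈ U ∧ E u w then h.choose else u)
             else attStrat owner E b U T u)
          else st' b u with hσ₁
        have hswb : StratWin owner E rank U b σ₁ U := by
          refine ⟨le_refl _, ?_, ?_, ?_⟩
          · -- own moves
            intro u huU hob
            by_cases hatt : u ∈ Att
            · by_cases ht : u ∈ T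
              · have hex : ∃ w, w ∈ U ∧ E u w := htot u huU
                have heq : σ₁ u = hex.choose := by
                  rw [hσ₁]; simp only [if_pos hatt, if_pos ht, dif_pos hex]
                rw [heq]
                exact ⟨hex.choose_spec.2, hex.choose_spec.1⟩
              · have hspec := attStrat_spec (hAtt ▸ hatt) ht hob
                have heq : σ₁ u = attStrat owner E b U T u := by
                  rw [hσ₁]; simp only [if_pos hatt, if_neg ht]
                rw [heq]
                exact ⟨hspec.1, attrIter_subset_U hTU hspec.2⟩
            · have huf : u ∈ f' b := by rw [hfb]; exact (hUA u).2 ⟨huU, hatt⟩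
              have heq : σ₁ u = st' b u := by rw [hσ₁]; simp only [if_neg hatt]
              rw [heq]
              have h2 := (hsw' b).2.1 u huf hob
              have h4 : st' b u ∈ U \ A := (hsw' b).1 h2.2
              exact ⟨h2.1, Finset.sdiff_subset h4⟩
          · intro u _ _ w hwU _; exact hwU
          · -- cycles
            intro u huU l hlne hchain hlast
            have hmemU : ∀ x ∈ u :: l, x ∈ U := by
              intro x hx
              rcases List.mem_cons.1 hx with h | h
              · subst h; exact huU
              · exact chain_all_closed (fun a _ y hy => hy.1) hchain huU x h
            by_cases hTc : ∃ x ∈ u :: l, x ∈ T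
            · obtain ⟨x, hxc, hxT⟩ := hTc
              have hmr : maxRank rank (u :: l) = d := by
                refine le_antisymm (maxRank_le fun y hy => hdmax y (hmemU y hy)) ?_
                calc d = rank x := hxT.2.symm
                _ ≤ _ := le_maxRank hxc
              rw [hmr]; exact hbd
            have hsucc := cycle_succ hlne hchain hlast
            by_cases hAc : ∃ x ∈ u :: l, x ∈ Att
            · exfalso
              refine hTc (cycle_attr hsucc ?_ hAc)
              intro x hxc hxA hxT y _ hR
              have hprog := attr_progress (hAtt ▸ hxA) hxT
              by_cases hox : owner x = b
              · have heq : y = σ₁ x := by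
                  obtain ⟨_, hR⟩ := hR; rwa [if_pos hox] at hR
                have hx1 : σ₁ x = attStrat owner E b U T x := by
                  rw [hσ₁]; simp only [if_pos (show x ∈ Att from hxA), if_neg hxT]
                have hspec := attStrat_spec (hAtt ▸ hxA) hxT hox
                rw [heq, hx1]
                refine ⟨⟨_, hspec.2⟩, ?_⟩
                have h6 := alevel_le hspec.2
                have h7 := hprog.2.1
                omega
              · obtain ⟨hyU, hR⟩ := hR
                rw [if_neg hox] at hR
                have h3 := hprog.2.2
                rw [if_neg hox] at h3
                have hy := h3 y hR hyU
                refine ⟨⟨_, hy⟩, ?_⟩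
                have h6 := alevel_le hy
                have h7 := hprog.2.1
                omega
            · push_neg at hAc
              have hmemf : ∀ x ∈ u :: l, x ∈ f' b := by
                intro x hx
                rw [hfb]
                exact (hUA x).2 ⟨hmemU x hx, hAc x hx⟩
              have hchain' : List.Chain (gstep owner E b (st' b) (U \ A)) u l := by
                refine chain_imp_mem (Q := fun x => x ∈ U ∧ x ∉ Att) ?_ hchain
                  ⟨huU, hAc u (by simp)⟩
                  (fun x hx => ⟨hmemU x (by simp [hx]), hAc x (by simp [hx])⟩)
                intro x y hQx hQy hr
                obtain ⟨hyU, hr⟩ := hr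
                refine ⟨(hUA y).2 hQy, ?_⟩
                by_cases hox : owner x = b
                · rw [if_pos hox] at hr ⊢
                  rw [hr, hσ₁]; simp only [if_neg hQx.2]
                · rwa [if_neg hox] at hr ⊢
              exact (hsw' b).2.2.2 u (hmemf u (by simp)) l hlne hchain' hlast
        refine ⟨fun c => if c = b then U else ∅, fun c => if c = b then σ₁ else fun u => u,
          ?_, ?_, ?_⟩
        · cases b <;> simp
        · cases b <;> simp
        · intro c
          by_cases hcb : c = b
          · subst hcb; simpa using hswb
          · simp only [if_neg hcb]
            exact ⟨by simp, by simp, by simp, by simp⟩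
      · -- Case 2
        have hW'ne : (f' (!b)).Nonempty := Finset.nonempty_iff_ne_empty.2 hWO
        set W' : Finset V := f' (!b) with hW'
        have hW'UA : W' ⊆ U \ A := (hsw' (!b)).1
        have hW'U : W' ⊆ U := hW'UA.trans Finset.sdiff_subset
        set AttB := AttrS owner E (!b) U (↑W' : Set V) with hAttB
        set B : Finset V := U.filter (fun u => u ∈ AttB) with hB
        have hBU : B ⊆ U := Finset.filter_subset _ _
        have hW'B : W' ⊆ B := by
          intro x hx
          rw [hB, Finset.mem_filter]
          exact ⟨hW'U hx, base_subset_attr (by simpa using hx)⟩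
        have hBne : B.Nonempty := hW'ne.mono hW'B
        have hcard'' : (U \ B).card ≤ N := by
          have h1 : (U \ B).card < U.card := Finset.card_lt_card (Finset.sdiff_ssubset hBU hBne)
          omega
        have hUB : ∀ u : V, u ∈ U \ B ↔ (u ∈ U ∧ u ∉ AttB) := by
          intro u
          rw [Finset.mem_sdiff, hB, Finset.mem_filter]
          exact ⟨fun ⟨h1, h2⟩ => ⟨h1, fun h => h2 ⟨h1, h⟩⟩, fun ⟨h1, h2⟩ => ⟨h1, fun h => h2 h.2⟩⟩
        have htot'' : ∀ u ∈ U \ B, ∃ w, w ∈ U \ B ∧ E u w := by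
          intro u hu
          obtain ⟨huU, huA⟩ := (hUB u).1 hu
          by_cases hob : owner u = !b
          · obtain ⟨w, hwU, hwE⟩ := htot u huU
            exact ⟨w, (hUB w).2 ⟨hwU, not_attr_own huA huU hob hwE⟩, hwE⟩
          · obtain ⟨w, hwE, hwU, hwA⟩ := not_attr_opp huA huU hob
            exact ⟨w, (hUB w).2 ⟨hwU, hwA⟩, hwE⟩
        obtain ⟨f'', st'', hun'', hdis'', hsw''⟩ := IH (U \ B) hcard'' htot''
        have hf''bU : f'' b ⊆ U \ B := (hsw'' b).1
        have hf''nU : f'' (!b) ⊆ U \ B := (hsw'' (!b)).1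
        set τp : V → V := fun u =>
          if u ∈ U \ B then st'' (!b) u
          else if u ∈ W' then st' (!b) u
          else if owner u = !b then attStrat owner E (!b) U (↑W' : Set V) u
          else u with hτp
        have hnbb : ¬ (!b) = b := by cases b <;> simp
        -- StratWin for player b on f'' b
        have hswB : StratWin owner E rank U b (st'' b) (f'' b) := by
          have h3 : ∀ u ∈ f'' b, ¬ owner u = b → ∀ w ∈ U, E u w → w ∈ f'' b := by
            intro u hu hob w hwU hwE
            have hub : owner u = !b := bool_ne_iff.1 hob
            have huUB := (hUB u).1 (hf''bU hu)
            have hwB : w ∉ AttB := not_attr_own huUB.2 huUB.1 hub hwE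
            exact (hsw'' b).2.2.1 u hu hob w ((hUB w).2 ⟨hwU, hwB⟩) hwE
          refine ⟨hf''bU.trans Finset.sdiff_subset, fun u hu hob => (hsw'' b).2.1 u hu hob, h3, ?_⟩
          intro u hu l hlne hchain hlast
          have hcl := stepClosed_of (fun x hx hox => ((hsw'' b).2.1 x hx hox).2) h3
          have hmem : ∀ x ∈ u :: l, x ∈ f'' b := by
            intro x hx
            rcases List.mem_cons.1 hx with h | h
            · subst h; exact hu
            · exact chain_all_closed hcl hchain hu x h
          have hchain' : List.Chain (gstep owner E b (st'' b) (U \ B)) u l := by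
            refine chain_imp_mem (Q := fun x => x ∈ f'' b) ?_ hchain hu
              (fun x hx => hmem x (by simp [hx]))
            intro x y _ hQy hr
            obtain ⟨_, hr⟩ := hr
            exact ⟨hf''bU hQy, hr⟩
          exact (hsw'' b).2.2.2 u hu l hlne hchain' hlast
        -- StratWin for player !b on f'' (!b) ∪ B
        set WO : Finset V := f'' (!b) ∪ B with hWO2
        have hWOU : WO ⊆ U := by
          rw [hWO2]
          exact Finset.union_subset (hf''nU.trans Finset.sdiff_subset) hBU
        have hown : ∀ u ∈ WO, owner u = !b → E u (τp u) ∧ τp u ∈ WO := by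
          intro u hu hob
          rcases Finset.mem_union.1 hu with h1 | h1
          · have huUB : u ∈ U \ B := hf''nU h1
            have heq : τp u = st'' (!b) u := by rw [hτp]; simp only [if_pos huUB]
            rw [heq]
            have h2 := (hsw'' (!b)).2.1 u h1 hob
            exact ⟨h2.1, Finset.mem_union_left _ h2.2⟩
          · have hnUB : u ∉ U \ B := by
              rw [Finset.mem_sdiff]; rintro ⟨_, h⟩; exact h h1
            by_cases h2 : u ∈ W'
            · have heq : τp u = st' (!b) u := by
                rw [hτp]; simp only [if_neg hnUB, if_pos h2]
              rw [heq]
              have h3 := (hsw' (!b)).2.1 u h2 hob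
              exact ⟨h3.1, Finset.mem_union_right _ (hW'B h3.2)⟩
            · have heq : τp u = attStrat owner E (!b) U (↑W' : Set V) u := by
                rw [hτp]; simp only [if_neg hnUB, if_neg h2, if_pos hob]
              have huA : u ∈ AttB := (Finset.mem_filter.1 (hB ▸ h1)).2
              have hspec := attStrat_spec (hAttB ▸ huA) (by simpa using h2) hob
              rw [heq]
              refine ⟨hspec.1, Finset.mem_union_right _ ?_⟩
              rw [hB, Finset.mem_filter]
              exact ⟨attrIter_subset_U (by exact_mod_cast hW'U) hspec.2, ⟨_, hspec.2⟩⟩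
        have hopp : ∀ u ∈ WO, ¬ owner u = !b → ∀ w ∈ U, E u w → w ∈ WO := by
          intro u hu hob w hwU hwE
          have hub : owner u = b := by
            have := bool_ne_iff.1 hob; simpa using this
          rcases Finset.mem_union.1 hu with h1 | h1
          · by_cases hwB : w ∈ B
            · exact Finset.mem_union_right _ hwB
            · have hw2 : w ∈ U \ B := Finset.mem_sdiff.2 ⟨hwU, hwB⟩
              exact Finset.mem_union_left _ ((hsw'' (!b)).2.2.1 u h1 hob w hw2 hwE)
          · by_cases h2 : u ∈ W'
            · have huUA : u ∈ U \ A := hW'UA h2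
              have hjunk := (hUA u).1 huUA
              have hwAtt : w ∉ Att := not_attr_own hjunk.2 hjunk.1 hub hwE
              have hw' : w ∈ U \ A := (hUA w).2 ⟨hwU, hwAtt⟩
              exact Finset.mem_union_right _
                (hW'B ((hsw' (!b)).2.2.1 u h2 hob w hw' hwE))
            · have huA : u ∈ AttB := (Finset.mem_filter.1 (hB ▸ h1)).2
              have hprog := attr_progress (hAttB ▸ huA) (by simpa using h2)
              have h3 := hprog.2.2
              rw [if_neg hob] at h3
              have h4 := h3 w hwE hwU
              refine Finset.mem_union_right _ ?_
              rw [hB, Finset.mem_filter]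
              exact ⟨hwU, ⟨_, h4⟩⟩
        have hswO : StratWin owner E rank U (!b) τp WO := by
          refine ⟨hWOU, hown, hopp, ?_⟩
          intro u hu l hlne hchain hlast
          have hclWO := stepClosed_of (fun x hx hox => (hown x hx hox).2) hopp
          have hmemWO : ∀ x ∈ u :: l, x ∈ WO := by
            intro x hx
            rcases List.mem_cons.1 hx with h | h
            · subst h; exact hu
            · exact chain_all_closed hclWO hchain hu x h
          have hsucc := cycle_succ hlne hchain hlast
          have hclW' : ∀ a, a ∈ W' → ∀ y, gstep owner E (!b) τp U a y → y ∈ W' := by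
            refine stepClosed_of ?_ ?_
            · intro a ha hob
              have hnUB : a ∉ U \ B := by
                rw [Finset.mem_sdiff]; rintro ⟨_, h⟩; exact h (hW'B ha)
              have heq : τp a = st' (!b) a := by
                rw [hτp]; simp only [if_neg hnUB, if_pos ha]
              rw [heq]
              exact ((hsw' (!b)).2.1 a ha hob).2
            · intro a ha hob w hwU hwE
              have hab : owner a = b := by simpa using bool_ne_iff.1 hob
              have haUA := (hUA a).1 (hW'UA ha)
              have hwAtt : w ∉ Att := not_attr_own haUA.2 haUA.1 hab hwE
              exact (hsw' (!b)).2.2.1 a ha hob w ((hUA w).2 ⟨hwU, hwAtt⟩) hwE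
          by_cases hc1 : ∃ x ∈ u :: l, x ∈ W'
          · obtain ⟨x, hxc, hxW⟩ := hc1
            have huW : u ∈ W' := cycle_mem_start hclW' hchain hlast hxc hxW
            have hALL : ∀ x ∈ l, x ∈ W' := chain_all_closed hclW' hchain huW
            have hchain' : List.Chain (gstep owner E (!b) (st' (!b)) (U \ A)) u l := by
              refine chain_imp_mem (Q := fun x => x ∈ W') ?_ hchain huW hALL
              intro x y hQx hQy hr
              obtain ⟨_, hr⟩ := hr
              refine ⟨hW'UA hQy, ?_⟩
              by_cases hox : owner x = !b
              · rw [if_pos hox] at hr ⊢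
                have hnUB : x ∉ U \ B := by
                  rw [Finset.mem_sdiff]; rintro ⟨_, h⟩; exact h (hW'B hQx)
                rw [hr, hτp]; simp only [if_neg hnUB, if_pos hQx]
              · rwa [if_neg hox] at hr ⊢
            exact (hsw' (!b)).2.2.2 u huW l hlne hchain' hlast
          by_cases hc2 : ∃ x ∈ u :: l, x ∈ AttB
          · exfalso
            apply hc1
            have hcyc := cycle_attr hsucc ?_ hc2
            · obtain ⟨x, h1, h2⟩ := hcyc
              exact ⟨x, h1, by simpa using h2⟩
            intro x hxc hxA hxT y _ hR
            have hxU : x ∈ U := hWOU (hmemWO x hxc)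
            have hprog := attr_progress (hAttB ▸ hxA) hxT
            by_cases hox : owner x = !b
            · have heq : y = τp x := by
                obtain ⟨_, hR⟩ := hR; rwa [if_pos hox] at hR
              have hnUB : x ∉ U \ B := by
                rw [Finset.mem_sdiff]
                rintro ⟨_, h⟩
                exact h (Finset.mem_filter.2 ⟨hxU, hxA⟩)
              have hxW'2 : x ∉ W' := fun h => hxT (by simpa using h)
              have heq2 : τp x = attStrat owner E (!b) U (↑W' : Set V) x := by
                rw [hτp]; simp only [if_neg hnUB, if_neg hxW'2, if_pos hox]
              have hspec := attStrat_spec (hAttB ▸ hxA) hxT hox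
              rw [heq, heq2]
              refine ⟨⟨_, hspec.2⟩, ?_⟩
              have h6 := alevel_le hspec.2
              have h7 := hprog.2.1
              omega
            · obtain ⟨hyU, hR⟩ := hR
              rw [if_neg hox] at hR
              have h3 := hprog.2.2
              rw [if_neg hox] at h3
              have hy := h3 y hR hyU
              refine ⟨⟨_, hy⟩, ?_⟩
              have h6 := alevel_le hy
              have h7 := hprog.2.1
              omega
          · -- entirely in f'' (!b)
            push_neg at hc2
            have hmemf : ∀ x ∈ u :: l, x ∈ f'' (!b) := by
              intro x hx
              rcases Finset.mem_union.1 (hmemWO x hx) with h | h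
              · exact h
              · exact absurd ((Finset.mem_filter.1 (hB ▸ h)).2) (hc2 x hx)
            have hchain' : List.Chain (gstep owner E (!b) (st'' (!b)) (U \ B)) u l := by
              refine chain_imp_mem (Q := fun x => x ∈ f'' (!b)) ?_ hchain
                (hmemf u (by simp)) (fun x hx => hmemf x (by simp [hx]))
              intro x y hQx hQy hr
              obtain ⟨_, hr⟩ := hr
              refine ⟨hf''nU hQy, ?_⟩
              by_cases hox : owner x = !b
              · rw [if_pos hox] at hr ⊢
                rw [hr, hτp]; simp only [if_pos (hf''nU hQx)]
              · rwa [if_neg hox] at hr ⊢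
            exact (hsw'' (!b)).2.2.2 u (hmemf u (by simp)) l hlne hchain' hlast
        have h5 : f'' b ∪ f'' (!b) = U \ B := by
          cases b
          · simp only [Bool.not_false]
            rw [Finset.union_comm]; exact hun''
          · simpa using hun''
        have hu : f'' b ∪ WO = U := by
          rw [hWO2, ← Finset.union_assoc, h5, Finset.sdiff_union_of_subset hBU]
        have hd : Disjoint (f'' b) WO := by
          rw [hWO2]
          refine Finset.disjoint_union_right.2 ⟨?_, ?_⟩
          · cases b
            · exact hdis''.symm
            · simpa using hdis''
          · exact Finset.disjoint_of_subset_left hf''bU (Finset.sdiff_disjoint)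
        refine ⟨fun c => if c = b then f'' b else WO,
          fun c => if c = b then st'' b else τp, ?_, ?_, ?_⟩
        · show (if true = b then f'' b else WO) ∪ (if false = b then f'' b else WO) = U
          cases b
          · rw [if_neg (by simp), if_pos rfl, Finset.union_comm]; exact hu
          · rw [if_pos rfl, if_neg (by simp)]; exact hu
        · show Disjoint (if true = b then f'' b else WO) (if false = b then f'' b else WO)
          cases b
          · rw [if_neg (by simp), if_pos rfl]; exact hd.symm
          · rw [if_pos rfl, if_neg (by simp)]; exact hd
        · intro c
          by_cases hcb : c = b
          · subst hcb; simpa using hswB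
          · simp only [if_neg hcb]
            have hcnb : c = !b := by cases c <;> cases b <;> simp_all
            subst hcnb
            exact hswO

end Zielonka

section InfCycle
variable {V : Type*} [Fintype V]

lemma exists_inf_often (g : ℕ → V) (P : V → Prop)
    (h : ∀ N, ∃ n, N ≤ n ∧ P (g n)) : ∃ u, P u ∧ ∀ N, ∃ n, N ≤ n ∧ g n = u := by
  by_contra hno
  push_neg at hno
  classical
  set F : V → ℕ := fun u => if hu : P u ∧ ∃ N, ∀ n, N ≤ n → g n ≠ u then hu.2.choose else 0
    with hF
  have hFs : ∀ u, P u → ∀ n, F u ≤ n → g n ≠ u := by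
    intro u hu n hn
    by_cases h2 : ∃ N, ∀ n, N ≤ n → g n ≠ u
    · have hu2 : P u ∧ ∃ N, ∀ n, N ≤ n → g n ≠ u := ⟨hu, h2⟩
      have : F u = hu2.2.choose := by rw [hF]; simp only [dif_pos hu2]
      exact hu2.2.choose_spec n (this ▸ hn)
    · exfalso
      obtain ⟨N, hN⟩ := hno u hu
      exact h2 ⟨N, fun n hn hgn => hN n hn (hgn ▸ rfl)⟩
  obtain ⟨n, hn, hP⟩ := h (Finset.univ.sup F)
  exact hFs (g n) hP n (le_trans (Finset.le_sup (Finset.mem_univ (g n))) hn) rfl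

lemma infinite_path_cycle (rank : V → ℕ) {R : V → V → Prop} {g : ℕ → V}
    (hR : ∀ n, R (g n) (g (n + 1))) :
    ∃ (n₀ : ℕ) (l : List V), l ≠ [] ∧ List.Chain R (g n₀) l ∧
      l.getLast? = some (g n₀) ∧
      maxRank rank (g n₀ :: l) = sSup {r | ∀ N, ∃ n, N ≤ n ∧ rank (g n) = r} ∧
      (∀ x ∈ g n₀ :: l, ∃ m, x = g m) := by
  classical
  set S : Set ℕ := {r | ∀ N, ∃ n, N ≤ n ∧ rank (g n) = r} with hS
  set M := Finset.univ.sup rank with hM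
  have hSb : ∀ r ∈ S, r ≤ M := by
    intro r hr
    obtain ⟨n, _, hn⟩ := hr 0
    exact hn ▸ Finset.le_sup (Finset.mem_univ (g n))
  have hSne : S.Nonempty := by
    obtain ⟨u, _, hu⟩ := exists_inf_often g (fun _ => True) (fun N => ⟨N, le_refl N, trivial⟩)
    exact ⟨rank u, fun N => by obtain ⟨n, hn, he⟩ := hu N; exact ⟨n, hn, by rw [he]⟩⟩
  set r := sSup S with hr
  have hrS : r ∈ S := Nat.sSup_mem hSne ⟨M, hSb⟩
  have hkey : ∀ s, r < s → ∃ N, ∀ n, N ≤ n → rank (g n) ≠ s := by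
    intro s hs
    have hsS : s ∉ S := fun h => absurd (le_csSup ⟨M, hSb⟩ h) (by omega)
    rw [hS, Set.mem_setOf_eq] at hsS
    push_neg at hsS
    obtain ⟨N, hN⟩ := hsS
    exact ⟨N, fun n hn => hN n hn⟩
  set G : ℕ → ℕ := fun s => if h : r < s then (hkey s h).choose else 0 with hG
  have hGs : ∀ s, r < s → ∀ n, G s ≤ n → rank (g n) ≠ s := by
    intro s hs n hn
    have : G s = (hkey s hs).choose := by rw [hG]; simp only [dif_pos hs]
    exact (hkey s hs).choose_spec n (this ▸ hn)
  set N0 := (Finset.range (M + 2)).sup G with hN0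
  have hbound : ∀ n, N0 ≤ n → rank (g n) ≤ r := by
    intro n hn
    by_contra hgt
    push_neg at hgt
    have hle : rank (g n) ≤ M := Finset.le_sup (Finset.mem_univ (g n))
    have hmem : rank (g n) ∈ Finset.range (M + 2) := Finset.mem_range.2 (by omega)
    exact hGs (rank (g n)) hgt n (le_trans (Finset.le_sup hmem) hn) rfl
  obtain ⟨u, hur, hu⟩ := exists_inf_often g (fun x => rank x = r) hrS
  obtain ⟨n₀, hn₀, hgn₀⟩ := hu N0
  obtain ⟨n₁, hn₁, hgn₁⟩ := hu (n₀ + 1)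
  set k := n₁ - n₀ with hk
  have hkpos : k ≠ 0 := by omega
  refine ⟨n₀, (List.range k).map fun i => g (n₀ + 1 + i), by simp [hkpos], ?_, ?_, ?_, ?_⟩
  · exact chain_range_map hR k n₀
  · rw [getLast?_range_map hkpos]
    congr 1
    rw [hgn₀]
    rw [show n₀ + k = n₁ by omega]
    exact hgn₁
  · refine le_antisymm (maxRank_le ?_) ?_
    · intro x hx
      rcases List.mem_cons.1 hx with h | h
      · subst h; exact hbound n₀ hn₀
      · obtain ⟨i, _, rfl⟩ := List.mem_map.1 h
        exact hbound _ (by omega)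
    · calc r = rank (g n₀) := by rw [hgn₀, hur]
      _ ≤ _ := le_maxRank (by simp)
  · intro x hx
    rcases List.mem_cons.1 hx with h | h
    · exact ⟨n₀, h⟩
    · obtain ⟨i, _, rfl⟩ := List.mem_map.1 h
      exact ⟨n₀ + 1 + i, rfl⟩

end InfCycle

section PlayLemmas
variable {V : Type*} {A : Arena V} {v : V}

lemma seq_none_mono (p : Play A v) {m n : ℕ} (h : p.seq m = none) (hmn : m ≤ n) :
    p.seq n = none := by
  induction n with
  | zero => rw [Nat.le_zero.1 hmn] at h; exact h
  | succ n ih =>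
      rcases Nat.lt_or_ge m (n + 1) with h' | h'
      · exact p.none_succ n (ih (Nat.lt_succ_iff.1 h'))
      · rw [Nat.le_antisymm hmn h'] at h; exact h

lemma seq_some_of_succ (p : Play A v) {n : ℕ} {u : V} (h : p.seq (n + 1) = some u) :
    ∃ w, p.seq n = some w := by
  cases hn : p.seq n with
  | none => rw [p.none_succ n hn] at h; exact absurd h (by simp)
  | some w => exact ⟨w, rfl⟩

lemma hist_zero (p : Play A v) : p.hist 0 = [] := by
  simp [Play.hist]

lemma hist_succ (p : Play A v) {n : ℕ} {u : V} (h : p.seq n = some u) :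
    p.hist (n + 1) = p.hist n ++ [u] := by
  unfold Play.hist
  rw [List.range_succ, List.filterMap_append]
  simp [h]

lemma consPath_of_play {ρ : EStrategy A} (p : Play A v) (hcons : ConsistentWith ρ p) :
    ∀ (n : ℕ) (u : V), p.seq n = some u → ConsPath A ρ v (p.hist n) u := by
  intro n
  induction n with
  | zero =>
      intro u h
      rw [p.start] at h
      rw [← Option.some.inj h, hist_zero]
      exact ConsPath.refl
  | succ n ih =>
      intro u h
      obtain ⟨w, hw⟩ := seq_some_of_succ p h
      have hcp := ih w hw
      rw [hist_succ p hw]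
      by_cases ho : A.owner w = true
      · have h1 := (hcons n w hw ho).1
        rw [h] at h1
        exact ConsPath.stepE _ _ _ hcp ho h1.symm
      · have ho' : A.owner w = false := by
          cases hb : A.owner w
          · rfl
          · exact absurd hb ho
        exact ConsPath.stepO _ _ _ hcp ho' (p.step n w u hw h)

end PlayLemmas

noncomputable def duel {V : Type*} (A : Arena V) (ρ : EStrategy A) (τ : V → V)
    (v : V) : ℕ → List V × Option V
  | 0 => ([], some v)
  | n + 1 =>
      match duel A ρ τ v n with
      | (l, none) => (l, none)
      | (l, some u) => (l ++ [u], if A.owner u = true then ρ.move l u else some (τ u))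

section PminLemmas

lemma zf_inj : Function.Injective (fun p : ℕ => ((-1:ℤ)^p * p)) := by
  intro p q h
  simp only at h
  have h2 := congrArg (fun z : ℤ => z.natAbs) h
  simpa [Int.natAbs_mul, Int.natAbs_pow] using h2

lemma pmin_eq_none {S : Set ℕ} (h : ∀ r, r ∉ S) : pmin S = none := by
  rw [pmin, dif_neg]
  rintro ⟨m, hm, -⟩
  exact h m hm

lemma pmin_some {S : Set ℕ} (hfin : S.Finite) (hne : S.Nonempty) :
    ∃ m, pmin S = some m := by
  obtain ⟨m, hm, hmin⟩ := Finset.exists_min_image hfin.toFinset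
    (fun p : ℕ => ((-1:ℤ)^p * p)) (hfin.toFinset_nonempty.2 hne)
  have h : ∃ m ∈ S, ∀ x ∈ S, preceq m x := by
    refine ⟨m, hfin.mem_toFinset.1 hm, fun x hx => ?_⟩
    rcases lt_or_eq_of_le (hmin x (hfin.mem_toFinset.2 hx)) with h | h
    · exact Or.inl h
    · exact Or.inr (zf_inj h)
  rw [pmin, dif_pos h]
  exact ⟨_, rfl⟩

end PminLemmas

noncomputable def extendStrat {V : Type*} (A : Arena V) (ρ : EStrategy A) : EStrategy A where
  move h u := (ρ.move h u).elim
    (if hd : ∃ w, A.edge u w then some hd.choose else none) some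
  legal := by
    intro h u w hw
    cases hm : ρ.move h u with
    | some w' =>
        rw [hm] at hw
        simp only [Option.elim] at hw
        exact ρ.legal h u w (by rw [hm, hw])
    | none =>
        rw [hm] at hw
        simp only [Option.elim] at hw
        by_cases hd : ∃ x, A.edge u x
        · rw [dif_pos hd] at hw
          rw [← Option.some.inj hw]
          exact hd.choose_spec
        · rw [dif_neg hd] at hw
          exact absurd hw (by simp)

lemma extendStrat_some {V : Type*} {A : Arena V} {ρ : EStrategy A} {h : List V} {u w : V}
    (hm : ρ.move h u = some w) : (extendStrat A ρ).move h u = some w := by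
  show (ρ.move h u).elim _ some = some w
  rw [hm]
  simp [Option.elim]

lemma extendStrat_nonstop {V : Type*} {A : Arena V} (ρ : EStrategy A) :
    NonStopping (extendStrat A ρ) := by
  intro h u _ hd
  show (ρ.move h u).elim _ some ≠ none
  cases hm : ρ.move h u with
  | some w => simp [Option.elim]
  | none => simp only [Option.elim]; rw [dif_pos hd]; simp

theorem stmt11 {V C : Type*} [Fintype V] [Fintype C] (A : Arena V) (rank : V → ℕ)
    (CE : Set C) (χ : V → C) (hχ : ∀ u, A.owner u = true ↔ χ u ∈ CE)
    (v : V) (S : Set (C → Option ℕ)) (hS : ValidFamily A rank χ v S) :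
    (∃ ρ : EStrategy A, NonStopping ρ ∧ WinningFrom A rank ρ v) ↔
      ∃ P ∈ S, ∀ c ∈ CE, P c = none := by
  classical
  set E' : V → V → Prop := fun u w => A.edge u w ∨ ((∀ x, ¬ A.edge u x) ∧ w = u) with hE'
  set rank' : V → ℕ :=
    fun u => if ∀ x, ¬ A.edge u x then (if A.owner u = true then 1 else 0) else rank u
    with hrank'
  have htot : ∀ u ∈ (Finset.univ : Finset V), ∃ w, w ∈ (Finset.univ : Finset V) ∧ E' u w := by
    intro u _
    by_cases hd : ∀ x, ¬ A.edge u x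
    · exact ⟨u, Finset.mem_univ u, Or.inr ⟨hd, rfl⟩⟩
    · push_neg at hd
      obtain ⟨w, hw⟩ := hd
      exact ⟨w, Finset.mem_univ w, Or.inl hw⟩
  obtain ⟨f, st, hun, hdis, hsw⟩ :=
    zielonka A.owner E' rank' (Fintype.card V) Finset.univ (by rw [Finset.card_univ]) htot
  have hdead : ∀ u, (∀ x, ¬ A.edge u x) → ∀ b, A.owner u = b → u ∉ f b := by
    intro u hd b hb hu
    have hstep : gstep A.owner E' b (st b) Finset.univ u u := by
      refine ⟨Finset.mem_univ u, ?_⟩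
      by_cases hob : A.owner u = b
      · rw [if_pos hob]
        have h2 := (hsw b).2.1 u hu hob
        rcases h2.1 with h | h
        · exact absurd h (hd _)
        · exact h.2.symm
      · rw [if_neg hob]
        exact Or.inr ⟨hd, rfl⟩
    have hcyc := (hsw b).2.2.2 u hu [u] (by simp)
      (List.chain_cons.2 ⟨hstep, List.Chain.nil⟩) (by simp)
    have hmr : maxRank rank' (u :: [u]) = rank' u := by
      show max (rank' u) (max (rank' u) 0) = rank' u
      omega
    rw [hmr] at hcyc
    have hrv : rank' u = if A.owner u = true then 1 else 0 := by
      rw [hrank']; simp only [if_pos hd]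
    cases b
    · rw [hrv, hb] at hcyc
      simp [bpar, Nat.odd_iff] at hcyc
    · rw [hrv, hb] at hcyc
      simp [bpar, Nat.even_iff] at hcyc
  have hvmem : v ∈ f true ∪ f false := by rw [hun]; exact Finset.mem_univ v
  constructor
  · rintro ⟨ρ, hns, hwin⟩
    rcases Finset.mem_union.1 hvmem with hv | hv
    · -- v in E's region: produce the enforcement
      set σ₀ := st true with hσ₀
      have hownE : ∀ u, u ∈ f true → A.owner u = true → A.edge u (σ₀ u) ∧ σ₀ u ∈ f true := by
        intro u hu ho
        have h2 := (hsw true).2.1 u hu ho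
        rcases h2.1 with h | h
        · exact ⟨h, h2.2⟩
        · exact absurd hu (hdead u h.1 true ho)
      set σ : V → Option V := fun u => if A.edge u (σ₀ u) then some (σ₀ u) else none with hσ
      obtain ⟨ρσ, hmove⟩ : ∃ ρσ : EStrategy A, ∀ h u, ρσ.move h u = σ u := by
        refine ⟨⟨fun _ u => σ u, ?_⟩, fun _ _ => rfl⟩
        intro h u w hw
        rw [hσ] at hw
        dsimp only at hw
        by_cases he : A.edge u (σ₀ u)
        · rw [if_pos he] at hw
          rw [← Option.some.inj hw]
          exact he
        · rw [if_neg he] at hw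
          exact absurd hw (by simp)
      have hposi : Positional ρσ := by
        intro h h' u; rw [hmove, hmove]
      have hσsome : ∀ u, u ∈ f true → A.owner u = true → σ u = some (σ₀ u) := by
        intro u hu ho
        rw [hσ]
        exact if_pos (hownE u hu ho).1
      have hcpmem : ∀ h w, ConsPath A ρσ v h w → w ∈ f true := by
        intro h w hcp
        induction hcp with
        | refl => exact hv
        | stepO h u w hcp ho he ih =>
            exact (hsw true).2.2.1 u ih (by simp [ho]) w (Finset.mem_univ w) (Or.inl he)
        | stepE h u w hcp ho hm ih =>
            rw [hmove, hσsome u ih ho] at hm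
            rw [← Option.some.inj hm]
            exact (hownE u ih ho).2
      have hsafe : SafeFrom A rank ρσ v := by
        intro p hcons howins
        have hmemseq : ∀ n u, p.seq n = some u → u ∈ f true := fun n u h =>
          hcpmem _ _ (consPath_of_play p hcons n u h)
        rcases howins with ⟨n, u, hsn, hsn1, hstop, how⟩ | ⟨hinf, hodd⟩
        · have h1 := (hcons n u hsn how).1
          rw [hsn1, hmove, hσsome u (hmemseq n u hsn) how] at h1
          exact absurd h1.symm (by simp)
        · obtain ⟨g, hg⟩ : ∃ g : ℕ → V, ∀ n, p.seq n = some (g n) := by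
            have hex : ∀ n, ∃ u, p.seq n = some u := fun n =>
              Option.ne_none_iff_exists'.1 (hinf n)
            exact ⟨fun n => (hex n).choose, fun n => (hex n).choose_spec⟩
          have hchainstep : ∀ n, gstep A.owner E' true σ₀ Finset.univ (g n) (g (n + 1)) := by
            intro n
            refine ⟨Finset.mem_univ _, ?_⟩
            by_cases ho : A.owner (g n) = true
            · rw [if_pos ho]
              have h1 := (hcons n (g n) (hg n) ho).1
              rw [hg (n + 1), hmove, hσsome (g n) (hmemseq n _ (hg n)) ho] at h1
              exact Option.some.inj h1
            · rw [if_neg ho]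
              exact Or.inl (p.step n _ _ (hg n) (hg (n + 1)))
          obtain ⟨n₀, l, hlne, hchain, hlast, hmax, hmem⟩ := infinite_path_cycle rank hchainstep
          have hcyc := (hsw true).2.2.2 (g n₀) (hmemseq n₀ _ (hg n₀)) l hlne hchain hlast
          have hrr : maxRank rank' (g n₀ :: l) = maxRank rank (g n₀ :: l) := by
            refine maxRank_congr ?_
            intro x hx
            obtain ⟨m, rfl⟩ := hmem x hx
            have hnd : ¬ ∀ y, ¬ A.edge (g m) y := by
              push_neg
              exact ⟨g (m + 1), p.step m _ _ (hg m) (hg (m + 1))⟩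
            rw [hrank']
            simp only [if_neg hnd]
          rw [hrr, hmax] at hcyc
          have hinfr : infRank rank p = sSup {r | ∀ N, ∃ n, N ≤ n ∧ rank (g n) = r} := by
            unfold infRank
            congr 1
            ext r
            constructor
            · intro hr N
              obtain ⟨n, hn, u, hu, hru⟩ := hr N
              rw [hg n] at hu
              exact ⟨n, hn, by rw [← Option.some.inj hu] at hru; exact hru⟩
            · intro hr N
              obtain ⟨n, hn, hru⟩ := hr N
              exact ⟨n, hn, g n, hg n, hru⟩
          simp only [bpar, if_pos] at hcyc
          rw [← hinfr] at hcyc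
          exact (Nat.not_odd_iff_even.2 hcyc) hodd
      refine ⟨Phi A rank χ ρσ v, hS.2.1 ρσ hposi hsafe, ?_⟩
      intro c hc
      show pmin _ = none
      apply pmin_eq_none
      rintro r ⟨w, h, hχw, hcp, hstop, -⟩
      have how : A.owner w = true := (hχ w).2 (by rw [hχw]; exact hc)
      have hn := hstop how
      rw [hmove, hσsome w (hcpmem h w hcp) how] at hn
      exact absurd hn (by simp)
    · -- v in O's region: contradiction with the winning strategy
      exfalso
      set τ₀ := st false with hτ₀
      have hownO : ∀ u, u ∈ f false → A.owner u = false → A.edge u (τ₀ u) ∧ τ₀ u ∈ f false := by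
        intro u hu ho
        have h2 := (hsw false).2.1 u hu ho
        rcases h2.1 with h | h
        · exact ⟨h, h2.2⟩
        · exact absurd hu (hdead u h.1 false ho)
      have hoppO : ∀ u, u ∈ f false → A.owner u = true → ∀ w, A.edge u w → w ∈ f false := by
        intro u hu ho w he
        exact (hsw false).2.2.1 u hu (by simp [ho]) w (Finset.mem_univ w) (Or.inl he)
      set dl := duel A ρ τ₀ v with hdl
      have hstep_eq : ∀ n, dl (n + 1) =
          match dl n with
          | (l, none) => (l, none)
          | (l, some u) => (l ++ [u], if A.owner u = true then ρ.move l u else some (τ₀ u)) :=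
        fun n => rfl
      have hinv : ∀ n u, (dl n).2 = some u → u ∈ f false := by
        intro n
        induction n with
        | zero =>
            intro u h
            have h0 : dl 0 = ([], some v) := rfl
            rw [h0] at h
            rw [← Option.some.inj h]
            exact hv
        | succ n ih =>
            intro u h
            rcases hd : dl n with ⟨l, o⟩
            rw [hstep_eq n, hd] at h
            cases o with
            | none => simp at h
            | some u' =>
                have hu' : u' ∈ f false := ih u' (by rw [hd])
                dsimp only at h
                by_cases ho : A.owner u' = true
                · rw [if_pos ho] at h
                  exact hoppO u' hu' ho u (ρ.legal l u' u h)
                · rw [if_neg ho] at h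
                  rw [← Option.some.inj h]
                  exact (hownO u' hu' (by cases hb : A.owner u'; rfl; exact absurd hb ho)).2
      set p : Play A v :=
        { seq := fun n => (dl n).2
          stopped := true
          start := rfl
          none_succ := by
            intro n h
            rcases hd : dl n with ⟨l, o⟩
            rw [hd] at h
            cases o with
            | none => show (dl (n+1)).2 = none; rw [hstep_eq n, hd]
            | some u => simp at h
          step := by
            intro n u w hu hw
            rcases hd : dl n with ⟨l, o⟩
            rw [hd] at hu
            cases o with
            | none => simp at hu
            | some u' =>
                have huu : u' = u := Option.some.inj hu
                subst huu
                show A.edge u' w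
                rw [show (dl (n+1)).2 = if A.owner u' = true then ρ.move l u' else some (τ₀ u')
                  from by rw [hstep_eq n, hd]] at hw
                by_cases ho : A.owner u' = true
                · rw [if_pos ho] at hw
                  exact ρ.legal l u' w hw
                · rw [if_neg ho] at hw
                  rw [← Option.some.inj hw]
                  exact (hownO u' (hinv n u' (by rw [hd])) (by cases hb : A.owner u'; rfl; exact absurd hb ho)).1
          maximal := by
            intro n u hu hnone
            rcases hd : dl n with ⟨l, o⟩
            rw [hd] at hu
            cases o with
            | none => simp at hu
            | some u' =>
                have huu : u' = u := Option.some.inj hu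
                subst huu
                rw [show (dl (n+1)).2 = if A.owner u' = true then ρ.move l u' else some (τ₀ u')
                  from by rw [hstep_eq n, hd]] at hnone
                by_cases ho : A.owner u' = true
                · exact Or.inl ⟨rfl, ho⟩
                · rw [if_neg ho] at hnone
                  simp at hnone } with hp
      have hseq : ∀ n, p.seq n = (dl n).2 := fun n => rfl
      have hhist : ∀ n u, (dl n).2 = some u → p.hist n = (dl n).1 := by
        intro n
        induction n with
        | zero =>
            intro u h
            rw [hist_zero]
            rfl
        | succ n ih =>
            intro u h
            rcases hd : dl n with ⟨l, o⟩
            rw [hstep_eq n, hd] at h ⊢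
            cases o with
            | none => simp at h
            | some u' =>
                have h1 : p.seq n = some u' := by rw [hseq n, hd]
                rw [hist_succ p h1, ih u' (by rw [hd])]
                rw [hd]
      have hcons : ConsistentWith ρ p := by
        intro n u hsn ho
        rcases hd : dl n with ⟨l, o⟩
        have ho2 : o = some u := by rw [hseq n, hd] at hsn; exact hsn
        subst ho2
        constructor
        · show (dl (n + 1)).2 = ρ.move (p.hist n) u
          rw [hhist n u (by rw [hd]), hd, hstep_eq n, hd]
          dsimp only
          rw [if_pos ho]
        · intro _
          rfl
      have hwinp := hwin p hcons
      rcases hwinp with ⟨n, u, _, _, hst, _⟩ | ⟨hinf, heven⟩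
      · have : p.stopped = true := rfl
        rw [this] at hst
        exact absurd hst (by simp)
      · obtain ⟨g, hg⟩ : ∃ g : ℕ → V, ∀ n, p.seq n = some (g n) := by
          have hex : ∀ n, ∃ u, p.seq n = some u := fun n =>
            Option.ne_none_iff_exists'.1 (hinf n)
          exact ⟨fun n => (hex n).choose, fun n => (hex n).choose_spec⟩
        have hmemg : ∀ n, g n ∈ f false := fun n => hinv n (g n) (hg n)
        have hchainstep : ∀ n, gstep A.owner E' false τ₀ Finset.univ (g n) (g (n + 1)) := by
          intro n
          refine ⟨Finset.mem_univ _, ?_⟩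
          by_cases ho : A.owner (g n) = false
          · rw [if_pos ho]
            rcases hd : dl n with ⟨l, o⟩
            have ho2 : o = some (g n) := by
              have hgg := hg n
              rw [hseq n, hd] at hgg
              exact hgg
            subst ho2
            have h1 : (dl (n + 1)).2 = some (τ₀ (g n)) := by
              rw [hstep_eq n, hd]
              dsimp only
              rw [if_neg (by rw [ho]; simp)]
            rw [← hseq (n + 1), hg (n + 1)] at h1
            exact Option.some.inj h1
          · rw [if_neg ho]
            exact Or.inl (p.step n _ _ (hg n) (hg (n + 1)))
        obtain ⟨n₀, l, hlne, hchain, hlast, hmax, hmem⟩ := infinite_path_cycle rank hchainstep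
        have hcyc := (hsw false).2.2.2 (g n₀) (hmemg n₀) l hlne hchain hlast
        have hrr : maxRank rank' (g n₀ :: l) = maxRank rank (g n₀ :: l) := by
          refine maxRank_congr ?_
          intro x hx
          obtain ⟨m, rfl⟩ := hmem x hx
          have hnd : ¬ ∀ y, ¬ A.edge (g m) y := by
            push_neg
            exact ⟨g (m + 1), p.step m _ _ (hg m) (hg (m + 1))⟩
          rw [hrank']
          simp only [if_neg hnd]
        rw [hrr, hmax] at hcyc
        have hinfr : infRank rank p = sSup {r | ∀ N, ∃ n, N ≤ n ∧ rank (g n) = r} := by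
          unfold infRank
          congr 1
          ext r
          constructor
          · intro hr N
            obtain ⟨n, hn, u, hu, hru⟩ := hr N
            rw [hg n] at hu
            exact ⟨n, hn, by rw [← Option.some.inj hu] at hru; exact hru⟩
          · intro hr N
            obtain ⟨n, hn, hru⟩ := hr N
            exact ⟨n, hn, g n, hg n, hru⟩
        simp only [bpar, if_neg (by simp : ¬ (false = true))] at hcyc
        rw [← hinfr] at hcyc
        exact (Nat.not_odd_iff_even.2 heven) hcyc
  · -- completeness direction
    rintro ⟨P, hPS, hPnone⟩
    obtain ⟨ρ, hsafe, hesub⟩ := hS.1 P hPS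
    have hphiempty : ∀ h w, ConsPath A ρ v h w → A.owner w = true → ρ.move h w ≠ none := by
      intro h w hcp how hnone
      have hc : χ w ∈ CE := (hχ w).1 how
      have hPn : P (χ w) = none := hPnone (χ w) hc
      have hval : Phi A rank χ ρ v (χ w) ≠ none := by
        have hfin : {r | ∃ (w' : V) (h' : List V), χ w' = χ w ∧ ConsPath A ρ v h' w' ∧
            (A.owner w' = true → ρ.move h' w' = none) ∧
            r = maxRank rank (h' ++ [w'])}.Finite := by
          apply Set.Finite.subset (Set.finite_Iic (Finset.univ.sup rank))
          rintro r ⟨w', h', -, -, -, rfl⟩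
          exact Set.mem_Iic.2 (maxRank_le fun x _ => Finset.le_sup (Finset.mem_univ x))
        have hne : {r | ∃ (w' : V) (h' : List V), χ w' = χ w ∧ ConsPath A ρ v h' w' ∧
            (A.owner w' = true → ρ.move h' w' = none) ∧
            r = maxRank rank (h' ++ [w'])}.Nonempty :=
          ⟨maxRank rank (h ++ [w]), w, h, rfl, hcp, fun _ => hnone, rfl⟩
        obtain ⟨m, hm⟩ := pmin_some hfin hne
        show pmin _ ≠ none
        rw [hm]
        simp
      cases hPhi : Phi A rank χ ρ v (χ w) with
      | none => exact hval hPhi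
      | some m =>
          obtain ⟨q, hq, -⟩ := hesub (χ w) m hPhi
          rw [hPn] at hq
          exact absurd hq (by simp)
    refine ⟨extendStrat A ρ, extendStrat_nonstop ρ, ?_⟩
    intro p hcons'
    have key : ∀ n u, p.seq n = some u → ConsPath A ρ v (p.hist n) u := by
      intro n
      induction n with
      | zero =>
          intro u h
          rw [p.start] at h
          rw [← Option.some.inj h, hist_zero]
          exact ConsPath.refl
      | succ n ih =>
          intro u h
          obtain ⟨w, hw⟩ := seq_some_of_succ p h
          have hcp := ih w hw
          rw [hist_succ p hw]
          by_cases ho : A.owner w = true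
          · obtain ⟨w', hw'⟩ := Option.ne_none_iff_exists'.1 (hphiempty _ _ hcp ho)
            have h1 := (hcons' n w hw ho).1
            rw [h, extendStrat_some hw'] at h1
            rw [Option.some.inj h1]
            exact ConsPath.stepE _ _ _ hcp ho hw'
          · have ho' : A.owner w = false := by
              cases hb : A.owner w
              · rfl
              · exact absurd hb ho
            exact ConsPath.stepO _ _ _ hcp ho' (p.step n w u hw h)
    have hconsρ : ConsistentWith ρ p := by
      intro n u hs ho
      obtain ⟨w', hw'⟩ := Option.ne_none_iff_exists'.1 (hphiempty _ _ (key n u hs) ho)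
      have h1 := (hcons' n u hs ho).1
      rw [extendStrat_some hw'] at h1
      refine ⟨by rw [h1, hw'], fun hnone => ?_⟩
      rw [h1] at hnone
      exact absurd hnone (by simp)
    have hnoO := hsafe p hconsρ
    by_cases hfin : ∃ n, p.seq n = none
    · have hkne : Nat.find hfin ≠ 0 := by
        intro h0
        have hsp := Nat.find_spec hfin
        rw [h0, p.start] at hsp
        exact absurd hsp (by simp)
      obtain ⟨n, hn⟩ := Nat.exists_eq_succ_of_ne_zero hkne
      have hsn1 : p.seq (n + 1) = none := by
        have hsp := Nat.find_spec hfin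
        rw [hn] at hsp
        exact hsp
      obtain ⟨u, hu⟩ : ∃ u, p.seq n = some u := by
        refine Option.ne_none_iff_exists'.1 (Nat.find_min hfin ?_)
        omega
      by_cases ho : A.owner u = true
      · exfalso
        obtain ⟨w', hw'⟩ := Option.ne_none_iff_exists'.1 (hphiempty _ _ (key n u hu) ho)
        have h1 := (hcons' n u hu ho).1
        rw [hsn1, extendStrat_some hw'] at h1
        exact absurd h1.symm (by simp)
      · left
        have ho' : A.owner u = false := by
          cases hb : A.owner u
          · rfl
          · exact absurd hb ho
        refine ⟨n, u, hu, hsn1, ?_, ho'⟩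
        rcases p.maximal n u hu hsn1 with ⟨hst, ho2⟩ | ⟨hst, -⟩
        · exact absurd ho2 ho
        · exact hst
    · right
      push_neg at hfin
      refine ⟨hfin, ?_⟩
      rcases Nat.even_or_odd (infRank rank p) with h | h
      · exact h
      · exact absurd (Or.inr ⟨hfin, h⟩) hnoO
end
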